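/- arXiv:1408.1381 — 6 statements merged into one kernel-verified Lean document; each statement's English description precedes it below -/
import Mathlib

section
/- Let f be a three times continuously differentiable probability density on ℝ with compact support [a,b], positive on (a,b), whose critical points in (a,b) are finitely many and all nondegenerate (f'(x) = 0 implies f''(x) ≠ 0), and let m_1 < ⋯ < m_{r−1} denote the local minima of f in (a,b). Let K ⊂ (a,b) be a compact set containing all critical points of f in its interior, and let (g_n) be a sequence of twice continuously differentiable functions on ℝ such that g_n' → f' and g_n'' → f'' uniformly. Then there exists n_0 ∈ ℕ such that for every n ≥ n_0 the function g_n has exactly r − 1 local minima in K; consequently, the number of clusters of the modal clustering induced by g_n equals the number r of clusters of the modal clustering induced by f. -/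
/-!
On `K` minus small disjoint balls around the critical points of `f`, `|f'|` is bounded below,
so `g_n'` has no zeros there for large `n`. On each ball `f''` has the sign it has at the centre
`p`, and so does `g_n''` for large `n`. If `p` is a local maximum of `f`, then `g_n'' < 0` rules
out local minima of `g_n` in the ball. If `p` is a local minimum, `g_n'` is strictly increasing on
the ball and changes sign across it, as `f'` does, so `g_n` has exactly one local minimum there.
Thus the local minima of `g_n` in `K` are in bijection with those of `f`.
-/

open Filter Set Metric Topology

theorem TendstoUniformlyOn.eventually_mapsTo {ι α β : Type*} [TopologicalSpace α]
    [PseudoMetricSpace β] {L : Filter ι} {F : ι → α → β} {G : α → β} {s : Set α} {U : Set β}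
    (hF : TendstoUniformlyOn F G L s) (hs : IsCompact s) (hG : ContinuousOn G s)
    (hU : IsOpen U) (hGU : MapsTo G s U) : ∀ᶠ i in L, MapsTo (F i) s U := by
  obtain ⟨δ, hδ, hδU⟩ :=
    (hs.image_of_continuousOn hG).exists_thickening_subset_open hU hGU.image_subset
  filter_upwards [Metric.tendstoUniformlyOn_iff.1 hF δ hδ] with i hi x hx
  exact hδU (mem_thickening_iff.2 ⟨G x, mem_image_of_mem G hx, by rw [dist_comm]; exact hi x hx⟩)

theorem Set.ncard_eq_of_existsUnique_mem {α ι : Type*} {S : Set α} {M : Set ι} {J : ι → Set α}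
    (hJ : M.PairwiseDisjoint J) (hcover : S ⊆ ⋃ i ∈ M, J i)
    (hunique : ∀ i ∈ M, ∃! x, x ∈ J i ∧ x ∈ S) : S.ncard = M.ncard := by
  choose x hx hx_unique using hunique
  refine (ncard_congr x (fun i hi => (hx i hi).2) (fun i j hi hj hij => ?_) fun y hy => ?_).symm
  · exact hJ.elim_set hi hj (x i hi) (hx i hi).1 (hij ▸ (hx j hj).1)
  · obtain ⟨i, hi, hyi⟩ := mem_iUnion₂.1 (hcover hy)
    exact ⟨i, hi, (hx_unique i hi y ⟨hyi, hy⟩).symm⟩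

section SecondDerivative

variable {f : ℝ → ℝ} {x l u : ℝ}

theorem IsLocalMin.deriv_deriv_nonneg (h : IsLocalMin f x) (hc : ContinuousAt f x) :
    0 ≤ deriv (deriv f) x := by
  by_contra! hneg
  have hmax := isLocalMax_of_deriv_deriv_neg hneg h.deriv_eq_zero hc
  have hconst : f =ᶠ[𝓝 x] fun _ => f x := by
    filter_upwards [h, hmax] with y hmin hmax using le_antisymm hmax hmin
  have hderiv : deriv f =ᶠ[𝓝 x] fun _ => 0 := by simpa using hconst.deriv
  simp [hderiv.deriv_eq] at hneg

theorem isLocalMin_iff_deriv_deriv_pos (hc : ContinuousAt f x) (hd : deriv f x = 0)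
    (h2 : deriv (deriv f) x ≠ 0) : IsLocalMin f x ↔ 0 < deriv (deriv f) x :=
  ⟨fun h => (h.deriv_deriv_nonneg hc).lt_of_ne' h2,
    fun h => isLocalMin_of_deriv_deriv_pos h hd hc⟩

theorem existsUnique_isLocalMin_Ioo (hlu : l ≤ u) (hc : ContinuousOn f (Ioo l u))
    (hd : ContinuousOn (deriv f) (Icc l u)) (h2 : ∀ y ∈ Ioo l u, 0 < deriv (deriv f) y)
    (hl : deriv f l < 0) (hu : 0 < deriv f u) : ∃! y, y ∈ Ioo l u ∧ IsLocalMin f y := by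
  have hmono : StrictMonoOn (deriv f) (Icc l u) :=
    strictMonoOn_of_deriv_pos (convex_Icc l u) hd (by rwa [interior_Icc])
  obtain ⟨y, hy, hy0⟩ := intermediate_value_Ioo hlu hd ⟨hl, hu⟩
  refine ⟨y, ⟨hy, isLocalMin_of_deriv_deriv_pos (h2 y hy) hy0
    (hc.continuousAt (isOpen_Ioo.mem_nhds hy))⟩, fun z ⟨hz, hmin⟩ => ?_⟩
  exact hmono.injOn (Ioo_subset_Icc_self hz) (Ioo_subset_Icc_self hy)
    (hmin.deriv_eq_zero.trans hy0.symm)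

end SecondDerivative

section Perturbation

variable {ι : Type*} {L : Filter ι} {f : ℝ → ℝ} {g : ι → ℝ → ℝ}

theorem eventually_forall_not_isLocalMin_Ioo {l u : ℝ} (hg : ∀ i, Continuous (g i))
    (hf2 : ContinuousOn (deriv (deriv f)) (Icc l u))
    (hneg : MapsTo (deriv (deriv f)) (Icc l u) (Iio 0))
    (h2 : TendstoUniformlyOn (fun i => deriv (deriv (g i))) (deriv (deriv f)) L (Icc l u)) :
    ∀ᶠ i in L, ∀ y ∈ Ioo l u, ¬IsLocalMin (g i) y := by
  filter_upwards [h2.eventually_mapsTo isCompact_Icc hf2 isOpen_Iio hneg] with i hi y hy hmin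
  exact (hi (Ioo_subset_Icc_self hy)).not_ge (hmin.deriv_deriv_nonneg (hg i).continuousAt)

theorem eventually_existsUnique_isLocalMin_Ioo {l u : ℝ} (hlu : l ≤ u)
    (hg : ∀ i, ContDiff ℝ 1 (g i)) (hl : deriv f l < 0) (hu : 0 < deriv f u)
    (hf2 : ContinuousOn (deriv (deriv f)) (Icc l u))
    (hpos : MapsTo (deriv (deriv f)) (Icc l u) (Ioi 0))
    (h1l : Tendsto (fun i => deriv (g i) l) L (𝓝 (deriv f l)))
    (h1u : Tendsto (fun i => deriv (g i) u) L (𝓝 (deriv f u)))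
    (h2 : TendstoUniformlyOn (fun i => deriv (deriv (g i))) (deriv (deriv f)) L (Icc l u)) :
    ∀ᶠ i in L, ∃! y, y ∈ Ioo l u ∧ IsLocalMin (g i) y := by
  filter_upwards [h2.eventually_mapsTo isCompact_Icc hf2 isOpen_Ioi hpos,
    h1l.eventually (gt_mem_nhds hl), h1u.eventually (lt_mem_nhds hu)] with i hi hil hiu
  exact existsUnique_isLocalMin_Ioo hlu (hg i).continuous.continuousOn
    ((hg i).continuous_deriv le_rfl).continuousOn (fun y hy => hi (Ioo_subset_Icc_self hy)) hil hiu

theorem exists_pos_eventually_isLocalMin_ball {p : ℝ} {V : Set ℝ} (hf : ContDiff ℝ 2 f)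
    (hg : ∀ i, ContDiff ℝ 1 (g i)) (hV : V ∈ 𝓝 p) (hp : deriv f p = 0)
    (hp2 : deriv (deriv f) p ≠ 0)
    (h1 : ∀ x ∈ V, Tendsto (fun i => deriv (g i) x) L (𝓝 (deriv f x)))
    (h2 : TendstoLocallyUniformlyOn (fun i => deriv (deriv (g i))) (deriv (deriv f)) L V) :
    ∃ ρ > 0, closedBall p ρ ⊆ V ∧ ∀ᶠ i in L,
      (IsLocalMin f p → ∃! y, y ∈ ball p ρ ∧ IsLocalMin (g i) y) ∧
      (¬IsLocalMin f p → ∀ y ∈ ball p ρ, ¬IsLocalMin (g i) y) := by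
  have hf2 : Continuous (deriv (deriv f)) := (hf.deriv' (n := 1)).continuous_deriv le_rfl
  have hsign : {x | 0 < deriv (deriv f) x * deriv (deriv f) p} ∈ 𝓝 p :=
    (isOpen_lt continuous_const (hf2.mul continuous_const)).mem_nhds (mul_self_pos.2 hp2)
  obtain ⟨ρ, hρ, hρV⟩ := nhds_basis_closedBall.mem_iff.1 (inter_mem hV hsign)
  have hρV' : closedBall p ρ ⊆ V := fun x hx => (hρV hx).1
  have hunif := (tendstoLocallyUniformlyOn_iff_tendstoUniformlyOn_of_compact
    (isCompact_closedBall p ρ)).1 (h2.mono hρV')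
  refine ⟨ρ, hρ, hρV', ?_⟩
  rw [Real.closedBall_eq_Icc] at hρV hρV' hunif
  rw [Real.ball_eq_Ioo]
  have hmin_iff := isLocalMin_iff_deriv_deriv_pos hf.continuous.continuousAt hp hp2
  rcases hp2.lt_or_gt with hneg | hpos
  · filter_upwards [eventually_forall_not_isLocalMin_Ioo (fun i => (hg i).continuous)
      hf2.continuousOn (fun x hx => (neg_iff_neg_of_mul_pos (hρV hx).2).2 hneg) hunif] with i hi
    exact ⟨fun hmin => absurd (hmin_iff.1 hmin) hneg.not_gt, fun _ => hi⟩
  · have hpos' : MapsTo (deriv (deriv f)) (Icc (p - ρ) (p + ρ)) (Ioi 0) := fun x hx =>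
      (pos_iff_pos_of_mul_pos (hρV hx).2).2 hpos
    have hl_mem : p - ρ ∈ Icc (p - ρ) (p + ρ) := left_mem_Icc.2 (by linarith)
    have hu_mem : p + ρ ∈ Icc (p - ρ) (p + ρ) := right_mem_Icc.2 (by linarith)
    have hp_mem : p ∈ Icc (p - ρ) (p + ρ) := ⟨by linarith, by linarith⟩
    have hmono : StrictMonoOn (deriv f) (Icc (p - ρ) (p + ρ)) :=
      strictMonoOn_of_deriv_pos (convex_Icc _ _) (hf.continuous_deriv (by norm_num)).continuousOn
        fun x hx => hpos' (interior_subset hx)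
    filter_upwards [eventually_existsUnique_isLocalMin_Ioo (by linarith) hg
      (hp ▸ hmono hl_mem hp_mem (by linarith)) (hp ▸ hmono hp_mem hu_mem (by linarith))
      hf2.continuousOn hpos' (h1 _ (hρV' hl_mem)) (h1 _ (hρV' hu_mem)) hunif] with i hi
    exact ⟨fun _ => hi, fun hmin => absurd (hmin_iff.2 hpos) hmin⟩

theorem eventually_setOf_isLocalMin_subset {K W : Set ℝ} (hK : IsCompact K) (hW : IsOpen W)
    (hf : Continuous (deriv f)) (hzero : ∀ x ∈ K, deriv f x = 0 → x ∈ W)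
    (h1 : TendstoUniformlyOn (fun i => deriv (g i)) (deriv f) L K) :
    ∀ᶠ i in L, {x | x ∈ K ∧ IsLocalMin (g i) x} ⊆ W := by
  have hoff : MapsTo (deriv f) (K \ W) {0}ᶜ := fun x hx h0 => hx.2 (hzero x hx.1 h0)
  filter_upwards [(h1.mono sdiff_subset).eventually_mapsTo (hK.diff hW) hf.continuousOn
    isOpen_compl_singleton hoff] with i hi x ⟨hxK, hmin⟩
  by_contra hxW
  exact hi ⟨hxK, hxW⟩ hmin.deriv_eq_zero

theorem eventually_ncard_setOf_isLocalMin_eq {K : Set ℝ} (hf : ContDiff ℝ 2 f)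
    (hg : ∀ i, ContDiff ℝ 1 (g i)) (hK : IsCompact K)
    (hfin : {x | x ∈ K ∧ deriv f x = 0}.Finite)
    (hint : {x | x ∈ K ∧ deriv f x = 0} ⊆ interior K)
    (hnondeg : ∀ x ∈ K, deriv f x = 0 → deriv (deriv f) x ≠ 0)
    (h1 : TendstoUniformlyOn (fun i => deriv (g i)) (deriv f) L K)
    (h2 : TendstoLocallyUniformlyOn (fun i => deriv (deriv (g i))) (deriv (deriv f)) L K) :
    ∀ᶠ i in L, {x | x ∈ K ∧ IsLocalMin (g i) x}.ncard = {x | x ∈ K ∧ IsLocalMin f x}.ncard := by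
  set C := {x | x ∈ K ∧ deriv f x = 0}
  obtain ⟨U, hU, hU_disj⟩ := hfin.t2_separation
  have hball := fun p (hp : p ∈ C) => exists_pos_eventually_isLocalMin_ball hf hg
    (inter_mem ((hU p).2.mem_nhds (hU p).1) (isOpen_interior.mem_nhds (hint hp)))
    hp.2 (hnondeg p hp.1 hp.2) (fun x hx => h1.tendsto_at (interior_subset hx.2))
    (h2.mono (inter_subset_right.trans interior_subset))
  choose! ρ hρ hρ_sub hρ_ev using hball
  have hρU : ∀ p ∈ C, ball p (ρ p) ⊆ U p := fun p hp =>
    ball_subset_closedBall.trans ((hρ_sub p hp).trans inter_subset_left)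
  have hρK : ∀ p ∈ C, ball p (ρ p) ⊆ K := fun p hp =>
    ball_subset_closedBall.trans ((hρ_sub p hp).trans (inter_subset_right.trans interior_subset))
  have hMC : {x | x ∈ K ∧ IsLocalMin f x} ⊆ C := fun p hp => ⟨hp.1, hp.2.deriv_eq_zero⟩
  filter_upwards [eventually_setOf_isLocalMin_subset (W := ⋃ p ∈ C, ball p (ρ p)) hK
      (isOpen_biUnion fun _ _ => isOpen_ball)
      (hf.continuous_deriv (by norm_num)) (fun x hx h0 => mem_biUnion ⟨hx, h0⟩
        (mem_ball_self (hρ x ⟨hx, h0⟩))) h1,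
    (eventually_all_finite hfin).2 hρ_ev] with i hcover hlocal
  refine ncard_eq_of_existsUnique_mem (J := fun p => ball p (ρ p))
    ((hU_disj.subset hMC).mono_on fun p hp => hρU p (hMC hp)) (fun y hy => ?_) fun p hp => ?_
  · obtain ⟨p, hp, hyp⟩ := mem_iUnion₂.1 (hcover hy)
    by_cases hpmin : IsLocalMin f p
    · exact mem_biUnion ⟨hp.1, hpmin⟩ hyp
    · exact absurd hy.2 ((hlocal p hp).2 hpmin y hyp)
  · exact (existsUnique_congr fun y => and_congr_right fun hy =>
      (and_iff_right (hρK p (hMC hp) hy)).symm).1 ((hlocal p (hMC hp)).1 hp.2)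

end Perturbation

theorem modal_clustering_number_of_clusters_consistent_general
    (f : ℝ → ℝ) (hf : ContDiff ℝ 3 f)
    (a b : ℝ)
    (hcrit_fin : {x | x ∈ Set.Ioo a b ∧ deriv f x = 0}.Finite)
    (hnondeg : ∀ x ∈ Set.Ioo a b, deriv f x = 0 → deriv (deriv f) x ≠ 0)
    (r : ℕ) (hr : 1 ≤ r)
    (m : Fin (r - 1) → ℝ) (hm_mono : StrictMono m)
    (hm_min : {x | x ∈ Set.Ioo a b ∧ IsLocalMin f x} = Set.range m)
    (K : Set ℝ) (hK : IsCompact K) (hK_sub : K ⊆ Set.Ioo a b)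
    (hK_crit : {x | x ∈ Set.Ioo a b ∧ deriv f x = 0} ⊆ interior K)
    (g : ℕ → ℝ → ℝ) (hg : ∀ n, ContDiff ℝ 2 (g n))
    (hg1 : TendstoUniformly (fun n => deriv (g n)) (deriv f) atTop)
    (hg2 : TendstoUniformly (fun n => deriv (deriv (g n))) (deriv (deriv f)) atTop) :
    ∃ n₀ : ℕ, ∀ n ≥ n₀,
      {x | x ∈ K ∧ IsLocalMin (g n) x}.ncard = r - 1 ∧
      {x | x ∈ K ∧ IsLocalMin (g n) x}.ncard + 1 = r := by
  have hcrit_K : ∀ {x}, x ∈ K → deriv f x = 0 → x ∈ {x | x ∈ Ioo a b ∧ deriv f x = 0} :=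
    fun hx h0 => ⟨hK_sub hx, h0⟩
  have hminima : {x | x ∈ K ∧ IsLocalMin f x} = range m := by
    rw [← hm_min]
    ext x
    exact ⟨fun h => ⟨hK_sub h.1, h.2⟩,
      fun h => ⟨interior_subset (hK_crit ⟨h.1, h.2.deriv_eq_zero⟩), h.2⟩⟩
  obtain ⟨n₀, hn₀⟩ := eventually_atTop.1 <| eventually_ncard_setOf_isLocalMin_eq
    (hf.of_le (by norm_num)) (fun n => (hg n).of_le (by norm_num)) hK
    (hcrit_fin.subset fun _ hx => hcrit_K hx.1 hx.2) (fun _ hx => hK_crit (hcrit_K hx.1 hx.2))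
    (fun x hx => hnondeg x (hK_sub hx)) hg1.tendstoUniformlyOn
    hg2.tendstoLocallyUniformly.tendstoLocallyUniformlyOn
  refine ⟨n₀, fun n hn => ?_⟩
  have hcard := hn₀ n hn
  rw [hminima, ncard_range_of_injective hm_mono.injective, Nat.card_eq_fintype_card,
    Fintype.card_fin] at hcard
  exact ⟨hcard, by omega⟩

/-- If `f` is a `C³` probability density on `ℝ` with compact support `[a,b]`, positive on
`(a,b)`, with finitely many nondegenerate critical points in `(a,b)` and local minima
`m₁ < ⋯ < m_{r-1}`, `K ⊆ (a,b)` is a compact set containing all critical points of `f` in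
its interior, and `gₙ` are `C²` functions with `gₙ' → f'` and `gₙ'' → f''` uniformly, then
eventually `gₙ` has exactly `r - 1` local minima in `K`; consequently the number of clusters
of the modal clustering induced by `gₙ` (one more than the number of local minima) equals
the number `r` of clusters of the modal clustering induced by `f`. -/
theorem modal_clustering_number_of_clusters_consistent
    (f : ℝ → ℝ) (hf : ContDiff ℝ 3 f)
    (a b : ℝ) (hab : a < b)
    (hf_nonneg : ∀ x, 0 ≤ f x)
    (hf_int : ∫ x, f x = 1)
    (hf_supp : tsupport f = Set.Icc a b)
    (hf_pos : ∀ x ∈ Set.Ioo a b, 0 < f x)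
    (hcrit_fin : {x | x ∈ Set.Ioo a b ∧ deriv f x = 0}.Finite)
    (hnondeg : ∀ x ∈ Set.Ioo a b, deriv f x = 0 → deriv (deriv f) x ≠ 0)
    (r : ℕ) (hr : 1 ≤ r)
    (m : Fin (r - 1) → ℝ) (hm_mono : StrictMono m)
    (hm_mem : ∀ j, m j ∈ Set.Ioo a b)
    (hm_min : {x | x ∈ Set.Ioo a b ∧ IsLocalMin f x} = Set.range m)
    (K : Set ℝ) (hK : IsCompact K) (hK_sub : K ⊆ Set.Ioo a b)
    (hK_crit : {x | x ∈ Set.Ioo a b ∧ deriv f x = 0} ⊆ interior K)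
    (g : ℕ → ℝ → ℝ) (hg : ∀ n, ContDiff ℝ 2 (g n))
    (hg1 : TendstoUniformly (fun n => deriv (g n)) (deriv f) atTop)
    (hg2 : TendstoUniformly (fun n => deriv (deriv (g n))) (deriv (deriv f)) atTop) :
    ∃ n₀ : ℕ, ∀ n ≥ n₀,
      {x | x ∈ K ∧ IsLocalMin (g n) x}.ncard = r - 1 ∧
      {x | x ∈ K ∧ IsLocalMin (g n) x}.ncard + 1 = r :=
  modal_clustering_number_of_clusters_consistent_general f hf a b hcrit_fin hnondeg r hr m hm_mono
    hm_min K hK hK_sub hK_crit g hg hg1 hg2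
end

section
/- Let f be a three times continuously differentiable probability density on ℝ with compact support [a,b], positive on (a,b), whose critical points in (a,b) are finitely many and all nondegenerate, with local minima m_1 < ⋯ < m_{r−1} in (a,b), and let P be the probability measure with density f. Let K ⊂ (a,b) be a compact set containing all critical points of f in its interior, and let (g_n) be twice continuously differentiable functions with g_n' → f' and g_n'' → f'' uniformly, so that for all n beyond some n_0 the function g_n has exactly r − 1 local minima m̂_{n,1} < ⋯ < m̂_{n,r−1} in K. Let 𝒞̂_n = {(m̂_{n,0}, m̂_{n,1}), …, (m̂_{n,r−1}, m̂_{n,r})} (with m̂_{n,0} = −∞, m̂_{n,r} = +∞) be the modal clustering induced by g_n and 𝒞_0 the modal clustering induced by f. Then d_P(𝒞̂_n, 𝒞_0) → 0 as n → ∞. -/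
open MeasureTheory Filter Set
open scoped ENNReal

/-- The modal (interval) clustering of `ℝ` determined by cut points `m 0 < ⋯ < m (r-2)`:
cluster `i` is the open interval `(m (i-1), m i)`, with `m (-1) = -∞` and `m (r-1) = +∞`. -/
def intervalClusters (r : ℕ) (m : Fin (r - 1) → ℝ) (i : Fin r) : Set ℝ :=
  {x : ℝ | (∀ j : Fin (r - 1), (j : ℕ) < (i : ℕ) → m j < x) ∧
           (∀ j : Fin (r - 1), (i : ℕ) ≤ (j : ℕ) → x < m j)}

/-- The distance in `P`-measure between two clusterings with the same number `r` of clusters: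
`d_P(𝒞,𝒟) = (1/2) min_{σ ∈ 𝒫_r} Σᵢ P(Cᵢ △ D_{σ(i)})`. -/
noncomputable def clusterDistP {X : Type*} [MeasurableSpace X] {r : ℕ}
    (P : Measure X) (C D : Fin r → Set X) : ℝ≥0∞ :=
  (⨅ σ : Equiv.Perm (Fin r), ∑ i, P (symmDiff (C i) (D (σ i)))) / 2

/-!
Nondegeneracy makes `f'` change sign from negative to positive across a small window
`(m j - δ, m j + δ)` around each local minimum `m j`. Convergence of `g n'` to `f'` at the window
endpoints transfers this sign change to `g n`, which therefore has a local minimum in every window.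
For small `δ` the windows are disjoint, ordered and inside `K`, and the local minima of `g n` in `K`
are exactly the increasing points `mhat n`, so the `j`-th window contains `mhat n j`; hence
`mhat n → m`. The matching clusters then differ only inside the intervals between `mhat n j` and
`m j`, whose `P`-measure tends to zero because `P` is atomless and finite on compacts.
-/

open scoped Topology

theorem IsLocalMin.deriv_deriv_pos {f : ℝ → ℝ} {x : ℝ} (hmin : IsLocalMin f x)
    (hc : ContinuousAt f x) (h : deriv (deriv f) x ≠ 0) : 0 < deriv (deriv f) x := by
  refine h.lt_or_gt.resolve_left fun hneg => h ?_
  -- a point that is both a local minimum and a local maximum has a locally constant neighbourhood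
  have hconst : f =ᶠ[𝓝 x] fun _ => f x :=
    (hmin.and (isLocalMax_of_deriv_deriv_neg hneg hmin.deriv_eq_zero hc)).mono
      fun _ hy => le_antisymm hy.2 hy.1
  simpa using hconst.deriv.deriv_eq

theorem IsLocalMin.eventually_deriv_neg_pos {f : ℝ → ℝ} {x : ℝ} (hmin : IsLocalMin f x)
    (hc : ContinuousAt f x) (h : deriv (deriv f) x ≠ 0) :
    ∀ᶠ δ in 𝓝[>] 0, deriv f (x - δ) < 0 ∧ 0 < deriv f (x + δ) := by
  have hsign := eventually_nhdsWithin_sign_eq_of_deriv_pos (hmin.deriv_deriv_pos hc h)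
    hmin.deriv_eq_zero
  have hl : Tendsto (fun δ => x - δ) (𝓝 0) (𝓝 x) := by
    simpa using ((continuous_sub_left x).tendsto 0)
  have hr : Tendsto (fun δ => x + δ) (𝓝 0) (𝓝 x) := by
    simpa using ((continuous_const_add x).tendsto 0)
  filter_upwards [nhdsWithin_le_nhds (hl.eventually hsign),
    nhdsWithin_le_nhds (hr.eventually hsign), self_mem_nhdsWithin] with δ hδl hδr (hδ : 0 < δ)
  exact ⟨sign_eq_neg_one_iff.1 (hδl.trans (sign_neg (by linarith))),
    sign_eq_one_iff.1 (hδr.trans (sign_pos (by linarith)))⟩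

theorem exists_isLocalMin_mem_Ioo_of_deriv {g : ℝ → ℝ} {c d : ℝ} (hcd : c < d)
    (hg : ContinuousOn g (Icc c d)) (hc : deriv g c < 0) (hd : 0 < deriv g d) :
    ∃ x ∈ Ioo c d, IsLocalMin g x := by
  obtain ⟨x, hx, hxmin⟩ := isCompact_Icc.exists_isMinOn (nonempty_Icc.2 hcd.le) hg
  have hleft : ∀ᶠ y in 𝓝[>] c, g y < g c := by
    filter_upwards [nhdsWithin_le_nhds (eventually_nhdsWithin_sign_eq_of_deriv_neg
      (f := fun y => g y - g c) (by simpa using hc) (sub_self _)), self_mem_nhdsWithin]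
      with y hy (hcy : c < y)
    exact sub_neg.1 (sign_eq_neg_one_iff.1 (hy.trans (sign_neg (by linarith))))
  have hright : ∀ᶠ y in 𝓝[<] d, g y < g d := by
    filter_upwards [nhdsWithin_le_nhds (eventually_nhdsWithin_sign_eq_of_deriv_pos
      (f := fun y => g y - g d) (by simpa using hd) (sub_self _)), self_mem_nhdsWithin]
      with y hy (hyd : y < d)
    exact sub_neg.1 (sign_eq_neg_one_iff.1 (hy.trans (sign_neg (by linarith))))
  obtain ⟨y, hy, hyI⟩ := (hleft.and (Ioo_mem_nhdsGT hcd)).exists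
  obtain ⟨z, hz, hzI⟩ := (hright.and (Ioo_mem_nhdsLT hcd)).exists
  have hxc : x ≠ c := by
    rintro rfl
    exact (hxmin (Ioo_subset_Icc_self hyI)).not_gt hy
  have hxd : x ≠ d := by
    rintro rfl
    exact (hxmin (Ioo_subset_Icc_self hzI)).not_gt hz
  have hxI : x ∈ Ioo c d := ⟨lt_of_le_of_ne hx.1 hxc.symm, lt_of_le_of_ne hx.2 hxd⟩
  exact ⟨x, hxI, hxmin.isLocalMin (Icc_mem_nhds hxI.1 hxI.2)⟩

theorem StrictMono.apply_mem_of_forall_exists {α β : Type*} [LinearOrder α] [Finite α]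
    [Preorder β] {y : α → β} (hy : StrictMono y) {I : α → Set β}
    (hI : ∀ i j, i < j → ∀ a ∈ I i, ∀ b ∈ I j, a < b) (h : ∀ i, ∃ k, y k ∈ I i) (i : α) :
    y i ∈ I i := by
  choose k hk using h
  have hk_mono : StrictMono k := fun i j hij => hy.lt_iff_lt.1 (hI i j hij _ (hk i) _ (hk j))
  simpa [hk_mono.apply_eq] using hk i

theorem tendsto_localMin_of_tendsto_deriv {ι : Type*} {l : Filter ι} {N : ℕ} {f : ℝ → ℝ}
    {g : ι → ℝ → ℝ} {U : Set ℝ} (hU : IsOpen U) {m : Fin N → ℝ} (hm : StrictMono m)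
    (hmU : ∀ j, m j ∈ U) (hf : ∀ j, ∀ᶠ δ in 𝓝[>] 0, deriv f (m j - δ) < 0 ∧ 0 < deriv f (m j + δ))
    (hg : ∀ n, Continuous (g n)) (hg' : ∀ x, Tendsto (fun n => deriv (g n) x) l (𝓝 (deriv f x)))
    {mhat : ι → Fin N → ℝ} (hmhat_mono : ∀ᶠ n in l, StrictMono (mhat n))
    (hmhat : ∀ᶠ n in l, ∀ x ∈ U, IsLocalMin (g n) x → x ∈ range (mhat n)) (j : Fin N) :
    Tendsto (fun n => mhat n j) l (𝓝 (m j)) := by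
  rw [(nhds_basis_Ioo_pos (m j)).tendsto_right_iff]
  intro ε hε
  have hball : ∀ i, ∀ᶠ δ in 𝓝[>] (0 : ℝ), Ioo (m i - δ) (m i + δ) ⊆ U := fun i => by
    obtain ⟨η, hη, hηU⟩ := Metric.isOpen_iff.1 hU _ (hmU i)
    filter_upwards [Ioo_mem_nhdsGT hη] with δ hδ
    rw [← Real.ball_eq_Ioo]
    exact (Metric.ball_subset_ball hδ.2.le).trans hηU
  have hsep : ∀ i i', i < i' → ∀ᶠ δ in 𝓝[>] (0 : ℝ), m i + δ < m i' - δ := fun i i' hii' => by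
    filter_upwards [Ioo_mem_nhdsGT (half_pos (sub_pos.2 (hm hii')))] with δ hδ
    linarith [hδ.2]
  have hsmall : ∀ᶠ δ in 𝓝[>] (0 : ℝ), δ ∈ Ioo 0 ε := Ioo_mem_nhdsGT hε
  obtain ⟨δ, ⟨⟨⟨hδ, hδε⟩, hδU⟩, hδf⟩, hδsep⟩ := (((hsmall.and
    (eventually_all.2 hball)).and (eventually_all.2 hf)).and
    (eventually_all.2 fun i => eventually_all.2 fun i' =>
      eventually_imp_distrib_left.2 (hsep i i'))).exists
  have hgδ : ∀ᶠ n in l, ∀ i, deriv (g n) (m i - δ) < 0 ∧ 0 < deriv (g n) (m i + δ) :=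
    eventually_all.2 fun i => ((hg' _).eventually (gt_mem_nhds (hδf i).1)).and
      ((hg' _).eventually (lt_mem_nhds (hδf i).2))
  filter_upwards [hgδ, hmhat_mono, hmhat] with n hn hmono hrange
  have hmem : mhat n j ∈ Ioo (m j - δ) (m j + δ) := by
    refine hmono.apply_mem_of_forall_exists (I := fun i => Ioo (m i - δ) (m i + δ))
      (fun i i' hii' a ha b hb => by linarith [ha.2, hb.1, hδsep i i' hii']) (fun i => ?_) j
    obtain ⟨x, hx, hxmin⟩ := exists_isLocalMin_mem_Ioo_of_deriv (by linarith)
      (hg n).continuousOn (hn i).1 (hn i).2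
    obtain ⟨k, rfl⟩ := hrange x (hδU i hx) hxmin
    exact ⟨k, hx⟩
  exact ⟨by linarith [hmem.1], by linarith [hmem.2]⟩

theorem intervalClusters_diff_subset (r : ℕ) (p q : Fin (r - 1) → ℝ) (i : Fin r) :
    intervalClusters r p i \ intervalClusters r q i ⊆ ⋃ j, uIcc (p j) (q j) := by
  rintro x ⟨⟨hpl, hpr⟩, hq⟩
  simp only [intervalClusters, mem_ofPred_eq, not_and_or, not_forall, not_lt] at hq
  simp only [mem_iUnion, mem_uIcc]
  rcases hq with ⟨j, hji, hj⟩ | ⟨j, hij, hj⟩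
  · exact ⟨j, Or.inl ⟨(hpl j hji).le, hj⟩⟩
  · exact ⟨j, Or.inr ⟨hj, (hpr j hij).le⟩⟩

theorem symmDiff_intervalClusters_subset (r : ℕ) (p q : Fin (r - 1) → ℝ) (i : Fin r) :
    symmDiff (intervalClusters r p i) (intervalClusters r q i) ⊆ ⋃ j, uIcc (p j) (q j) := by
  refine union_subset (intervalClusters_diff_subset r p q i) ?_
  simpa only [uIcc_comm] using intervalClusters_diff_subset r q p i

theorem clusterDistP_le_sum_measure_symmDiff {X : Type*} [MeasurableSpace X] {r : ℕ}
    (P : Measure X) (C D : Fin r → Set X) :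
    clusterDistP P C D ≤ ∑ i, P (symmDiff (C i) (D i)) :=
  ENNReal.half_le_self.trans' (ENNReal.div_le_div_right (iInf_le_of_le (Equiv.refl _) le_rfl) 2)

theorem tendsto_measure_uIcc_zero {ι : Type*} {l : Filter ι} (μ : Measure ℝ)
    [IsFiniteMeasureOnCompacts μ] [NullSingletonClass μ] {x : ι → ℝ} {y : ℝ}
    (hx : Tendsto x l (𝓝 y)) : Tendsto (fun n => μ (uIcc (x n) y)) l (𝓝 0) := by
  have hdist : Tendsto (fun n => |x n - y|) l (𝓝 0) := by
    simpa using (hx.sub_const y).abs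
  refine tendsto_of_tendsto_of_tendsto_of_le_of_le tendsto_const_nhds
    ((tendsto_measure_Icc μ y).comp hdist) (fun _ => zero_le) fun n => measure_mono ?_
  exact uIcc_subset_Icc (mem_Icc_iff_abs_le.1 (abs_sub_comm y (x n)).le)
    (mem_Icc_iff_abs_le.1 (by simp))

theorem tendsto_clusterDistP_intervalClusters {ι : Type*} {l : Filter ι} (μ : Measure ℝ)
    [IsFiniteMeasureOnCompacts μ] [NullSingletonClass μ] {r : ℕ} {m : Fin (r - 1) → ℝ}
    {mhat : ι → Fin (r - 1) → ℝ} (h : ∀ j, Tendsto (fun n => mhat n j) l (𝓝 (m j))) :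
    Tendsto (fun n => clusterDistP μ (intervalClusters r (mhat n)) (intervalClusters r m))
      l (𝓝 0) := by
  have hsum : Tendsto (fun n => ∑ _i : Fin r, ∑ j, μ (uIcc (mhat n j) (m j))) l
      (𝓝 (∑ _i : Fin r, ∑ _j : Fin (r - 1), 0)) :=
    tendsto_finsetSum _ fun _ _ => tendsto_finsetSum _ fun j _ => tendsto_measure_uIcc_zero μ (h j)
  simp only [Finset.sum_const_zero] at hsum
  refine tendsto_of_tendsto_of_tendsto_of_le_of_le tendsto_const_nhds hsum (fun _ => zero_le)
    fun n => (clusterDistP_le_sum_measure_symmDiff _ _ _).trans (Finset.sum_le_sum fun i _ => ?_)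
  exact (measure_mono (symmDiff_intervalClusters_subset r _ _ i)).trans
    (measure_iUnion_fintype_le _ _)

theorem modal_clustering_consistent_distP_general
    (f : ℝ → ℝ) (hf : ContDiff ℝ 3 f)
    (a b : ℝ)
    (hnondeg : ∀ x ∈ Set.Ioo a b, deriv f x = 0 → deriv (deriv f) x ≠ 0)
    (P : Measure ℝ) (hP : P = volume.withDensity (fun x => ENNReal.ofReal (f x)))
    (r : ℕ)
    (m : Fin (r - 1) → ℝ) (hm_mono : StrictMono m)
    (hm_mem : ∀ j, m j ∈ Set.Ioo a b)
    (hm_min : {x | x ∈ Set.Ioo a b ∧ IsLocalMin f x} = Set.range m)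
    (K : Set ℝ)
    (hK_crit : {x | x ∈ Set.Ioo a b ∧ deriv f x = 0} ⊆ interior K)
    (g : ℕ → ℝ → ℝ) (hg : ∀ n, ContDiff ℝ 2 (g n))
    (hg1 : TendstoUniformly (fun n => deriv (g n)) (deriv f) atTop)
    (mhat : ℕ → Fin (r - 1) → ℝ) (n₀ : ℕ)
    (hmhat_mono : ∀ n ≥ n₀, StrictMono (mhat n))
    (hmhat_min : ∀ n ≥ n₀, {x | x ∈ K ∧ IsLocalMin (g n) x} = Set.range (mhat n)) :
    Tendsto (fun n => clusterDistP P (intervalClusters r (mhat n)) (intervalClusters r m))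
      atTop (nhds 0) := by
  have hmin : ∀ j, IsLocalMin f (m j) := fun j => (hm_min.symm ▸ mem_range_self j).2
  have hcrit : ∀ j, m j ∈ interior K := fun j => hK_crit ⟨hm_mem j, (hmin j).deriv_eq_zero⟩
  have hsign : ∀ j, ∀ᶠ δ in 𝓝[>] 0, deriv f (m j - δ) < 0 ∧ 0 < deriv f (m j + δ) := fun j =>
    (hmin j).eventually_deriv_neg_pos hf.continuous.continuousAt
      (hnondeg _ (hm_mem j) (hmin j).deriv_eq_zero)
  have hmhat : ∀ᶠ n in atTop, ∀ x ∈ interior K, IsLocalMin (g n) x → x ∈ range (mhat n) :=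
    eventually_atTop.2 ⟨n₀, fun n hn x hx hxmin => hmhat_min n hn ▸ ⟨interior_subset hx, hxmin⟩⟩
  have hconv : ∀ j, Tendsto (fun n => mhat n j) atTop (𝓝 (m j)) :=
    tendsto_localMin_of_tendsto_deriv isOpen_interior hm_mono hcrit hsign
      (fun n => (hg n).continuous) hg1.tendsto_at (eventually_atTop.2 ⟨n₀, hmhat_mono⟩) hmhat
  subst hP
  have := IsLocallyFiniteMeasure.withDensity_ofReal (μ := volume) hf.continuous
  exact tendsto_clusterDistP_intervalClusters _ hconv

/-- Consistency of plug-in modal clustering in the distance in `P`-measure: if `f` is a `C³`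
probability density with compact support `[a,b]`, positive on `(a,b)`, with finitely many
nondegenerate critical points and local minima `m₁ < ⋯ < m_{r-1}`, and `gₙ` are `C²` functions
with `gₙ' → f'`, `gₙ'' → f''` uniformly whose local minima in `K` are eventually
`m̂_{n,1} < ⋯ < m̂_{n,r-1}`, then `d_P(𝒞̂ₙ, 𝒞₀) → 0`. -/
theorem modal_clustering_consistent_distP
    (f : ℝ → ℝ) (hf : ContDiff ℝ 3 f)
    (a b : ℝ) (hab : a < b)
    (hf_nonneg : ∀ x, 0 ≤ f x)
    (hf_int : ∫ x, f x = 1)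
    (hf_supp : tsupport f = Set.Icc a b)
    (hf_pos : ∀ x ∈ Set.Ioo a b, 0 < f x)
    (hcrit_fin : {x | x ∈ Set.Ioo a b ∧ deriv f x = 0}.Finite)
    (hnondeg : ∀ x ∈ Set.Ioo a b, deriv f x = 0 → deriv (deriv f) x ≠ 0)
    (P : Measure ℝ) (hP : P = volume.withDensity (fun x => ENNReal.ofReal (f x)))
    (r : ℕ) (hr : 1 ≤ r)
    (m : Fin (r - 1) → ℝ) (hm_mono : StrictMono m)
    (hm_mem : ∀ j, m j ∈ Set.Ioo a b)
    (hm_min : {x | x ∈ Set.Ioo a b ∧ IsLocalMin f x} = Set.range m)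
    (K : Set ℝ) (hK : IsCompact K) (hK_sub : K ⊆ Set.Ioo a b)
    (hK_crit : {x | x ∈ Set.Ioo a b ∧ deriv f x = 0} ⊆ interior K)
    (g : ℕ → ℝ → ℝ) (hg : ∀ n, ContDiff ℝ 2 (g n))
    (hg1 : TendstoUniformly (fun n => deriv (g n)) (deriv f) atTop)
    (hg2 : TendstoUniformly (fun n => deriv (deriv (g n))) (deriv (deriv f)) atTop)
    (mhat : ℕ → Fin (r - 1) → ℝ) (n₀ : ℕ)
    (hmhat_mono : ∀ n ≥ n₀, StrictMono (mhat n))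
    (hmhat_min : ∀ n ≥ n₀, {x | x ∈ K ∧ IsLocalMin (g n) x} = Set.range (mhat n)) :
    Tendsto (fun n => clusterDistP P (intervalClusters r (mhat n)) (intervalClusters r m))
      atTop (nhds 0) :=
  modal_clustering_consistent_distP_general f hf a b hnondeg P hP r m hm_mono hm_mem hm_min K
    hK_crit g hg hg1 mhat n₀ hmhat_mono hmhat_min
end

section
/- Let f : ℝ → ℝ be continuously differentiable, let m ∈ ℝ and ε > 0 be such that f'(m) = 0, f' < 0 on [m − ε, m) and f' > 0 on (m, m + ε]. Let (g_n) be continuously differentiable functions with g_n' → f' uniformly on [m − ε, m + ε], and let x_n ∈ [m − ε, m + ε] satisfy g_n'(x_n) = 0 for all n. Then x_n → m as n → ∞. -/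
open Filter Set

/-- M-estimation consistency: if `f'` vanishes at `m`, is negative on `[m-ε, m)` and
positive on `(m, m+ε]`, and `gₙ' → f'` uniformly on `[m-ε, m+ε]`, then any sequence of
zeros `xₙ` of `gₙ'` in `[m-ε, m+ε]` converges to `m`. -/
theorem zeros_of_uniformly_convergent_derivatives_tendsto
    (f : ℝ → ℝ) (hf : ContDiff ℝ 1 f)
    (m ε : ℝ) (hε : 0 < ε)
    (hm : deriv f m = 0)
    (hneg : ∀ x ∈ Set.Ico (m - ε) m, deriv f x < 0)
    (hpos : ∀ x ∈ Set.Ioc m (m + ε), 0 < deriv f x)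
    (g : ℕ → ℝ → ℝ) (hg : ∀ n, ContDiff ℝ 1 (g n))
    (hconv : TendstoUniformlyOn (fun n => deriv (g n)) (deriv f) atTop
      (Set.Icc (m - ε) (m + ε)))
    (x : ℕ → ℝ) (hx : ∀ n, x n ∈ Set.Icc (m - ε) (m + ε))
    (hx0 : ∀ n, deriv (g n) (x n) = 0) :
    Tendsto x atTop (nhds m) := by
  rw [Metric.tendsto_atTop]
  intro η hη
  set η' := min η ε with hη'def
  have hη' : 0 < η' := lt_min hη hε
  have hη'ε : η' ≤ ε := min_le_right _ _
  set K : Set ℝ := Set.Icc (m - ε) (m - η') ∪ Set.Icc (m + η') (m + ε) with hK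
  have hKc : IsCompact K := (isCompact_Icc.union isCompact_Icc)
  have hKne : K.Nonempty := ⟨m - ε, Or.inl ⟨le_refl _, by linarith⟩⟩
  have hcont : ContinuousOn (fun y => |deriv f y|) K :=
    ((hf.continuous_deriv le_rfl).abs).continuousOn
  obtain ⟨y0, hy0K, hy0min⟩ := hKc.exists_isMinOn hKne hcont
  have hδ : 0 < |deriv f y0| := by
    rcases hy0K with h | h
    · have : deriv f y0 < 0 := hneg y0 ⟨h.1, by linarith [h.2]⟩
      exact abs_pos.mpr (ne_of_lt this)
    · have : 0 < deriv f y0 := hpos y0 ⟨by linarith [h.1], h.2⟩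
      exact abs_pos.mpr (ne_of_gt this)
  rw [Metric.tendstoUniformlyOn_iff] at hconv
  obtain ⟨N, hN⟩ := (hconv _ hδ).exists_forall_of_atTop
  refine ⟨N, fun n hn => ?_⟩
  have hxn := hx n
  have h1 : dist (deriv f (x n)) (deriv (g n) (x n)) < |deriv f y0| := hN n hn _ hxn
  rw [hx0 n, dist_zero_right, Real.norm_eq_abs] at h1
  have hnotK : x n ∉ K := fun hmem => absurd h1 (not_lt.mpr (hy0min hmem))
  have h2 : m - η' < x n := by
    by_contra h
    exact hnotK (Or.inl ⟨hxn.1, not_lt.mp h⟩)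
  have h3 : x n < m + η' := by
    by_contra h
    exact hnotK (Or.inr ⟨not_lt.mp h, hxn.2⟩)
  rw [Real.dist_eq, abs_lt]
  have := min_le_left η ε
  constructor <;> linarith
end

section
/- Let P be a probability measure on ℝ^d, and let 𝒞 = {C_1, …, C_r} and 𝒟 = {D_1, …, D_s} be clusterings of P. Suppose ε > 0 satisfies 2ε < min_{i ≠ i'} P(C_i △ C_{i'}) and 2ε < min_{j ≠ j'} P(D_j △ D_{j'}). If d_H(𝒞,𝒟) ≤ ε, then r = s, i.e., 𝒞 and 𝒟 have the same number of clusters. -/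
open MeasureTheory Set
open scoped ENNReal

/-- The Hausdorff distance between two clusterings:
`d_H(𝒞,𝒟) = max{ maxᵢ minⱼ P(Cᵢ △ Dⱼ), maxⱼ minᵢ P(Cᵢ △ Dⱼ) }`. -/
noncomputable def clusterDistH {X : Type*} [MeasurableSpace X] {r s : ℕ}
    (P : Measure X) (C : Fin r → Set X) (D : Fin s → Set X) : ℝ≥0∞ :=
  max (⨆ i, ⨅ j, P (symmDiff (C i) (D j))) (⨆ j, ⨅ i, P (symmDiff (C i) (D j)))

/-- If `ε > 0` is less than one half of the minimum distance between the clusters within `𝒞`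
and also less than one half of the minimum distance between the clusters within `𝒟`, then
`d_H(𝒞,𝒟) ≤ ε` implies that `𝒞` and `𝒟` have the same number of clusters. -/
theorem clusterDistH_le_implies_same_number_of_clusters
    (d : ℕ) (P : Measure (Fin d → ℝ)) [IsProbabilityMeasure P]
    (r s : ℕ) (C : Fin r → Set (Fin d → ℝ)) (D : Fin s → Set (Fin d → ℝ))
    (hCmeas : ∀ i, MeasurableSet (C i)) (hDmeas : ∀ j, MeasurableSet (D j))
    (hCpos : ∀ i, 0 < P (C i)) (hDpos : ∀ j, 0 < P (D j))
    (hCdisj : ∀ i j, i ≠ j → P (C i ∩ C j) = 0)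
    (hDdisj : ∀ i j, i ≠ j → P (D i ∩ D j) = 0)
    (hCcov : P (⋃ i, C i) = 1) (hDcov : P (⋃ j, D j) = 1)
    (ε : ℝ≥0∞) (hε : 0 < ε)
    (hεC : ∀ i i', i ≠ i' → 2 * ε < P (symmDiff (C i) (C i')))
    (hεD : ∀ j j', j ≠ j' → 2 * ε < P (symmDiff (D j) (D j')))
    (hH : clusterDistH P C D ≤ ε) :
    r = s := by
  have hr : 0 < r := by
    rcases Nat.eq_zero_or_pos r with h | h
    · exfalso
      subst h
      rw [iUnion_of_empty] at hCcov
      simp at hCcov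
    · exact h
  have hs : 0 < s := by
    rcases Nat.eq_zero_or_pos s with h | h
    · exfalso
      subst h
      rw [iUnion_of_empty] at hDcov
      simp at hDcov
    · exact h
  have hsne : Nonempty (Fin s) := ⟨⟨0, hs⟩⟩
  have hrne : Nonempty (Fin r) := ⟨⟨0, hr⟩⟩
  have h1 : (⨆ i, ⨅ j, P (symmDiff (C i) (D j))) ≤ ε := le_trans (le_max_left _ _) hH
  have h2 : (⨆ j, ⨅ i, P (symmDiff (C i) (D j))) ≤ ε := le_trans (le_max_right _ _) hH
  have hf : ∀ i, ∃ j, P (symmDiff (C i) (D j)) ≤ ε := by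
    intro i
    obtain ⟨j, hj⟩ := Finite.exists_min (fun j => P (symmDiff (C i) (D j)))
    exact ⟨j, le_trans (le_iInf hj) (le_trans (le_iSup (fun i => ⨅ j, P (symmDiff (C i) (D j))) i) h1)⟩
  have hg : ∀ j, ∃ i, P (symmDiff (C i) (D j)) ≤ ε := by
    intro j
    obtain ⟨i, hi⟩ := Finite.exists_min (fun i => P (symmDiff (C i) (D j)))
    exact ⟨i, le_trans (le_iInf hi) (le_trans (le_iSup (fun j => ⨅ i, P (symmDiff (C i) (D j))) j) h2)⟩
  choose f hfspec using hf
  choose g hgspec using hg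
  have hfinj : Function.Injective f := by
    intro i i' hii'
    by_contra hne
    have := hεC i i' hne
    have htri : P (symmDiff (C i) (C i')) ≤ P (symmDiff (C i) (D (f i))) + P (symmDiff (D (f i)) (C i')) :=
      measure_symmDiff_le _ _ _
    have h3 : P (symmDiff (D (f i)) (C i')) = P (symmDiff (C i') (D (f i'))) := by
      rw [symmDiff_comm, hii']
    have : P (symmDiff (C i) (C i')) ≤ 2 * ε := by
      rw [two_mul]
      calc P (symmDiff (C i) (C i')) ≤ _ := htri
        _ ≤ ε + ε := by
          rw [h3]
          exact add_le_add (hfspec i) (hfspec i')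
    exact absurd this (not_le.mpr (hεC i i' hne))
  have hginj : Function.Injective g := by
    intro j j' hjj'
    by_contra hne
    have htri : P (symmDiff (D j) (D j')) ≤ P (symmDiff (D j) (C (g j))) + P (symmDiff (C (g j)) (D j')) :=
      measure_symmDiff_le _ _ _
    have h3 : P (symmDiff (D j) (C (g j))) = P (symmDiff (C (g j)) (D j)) := by
      rw [symmDiff_comm]
    have h4 : P (symmDiff (C (g j)) (D j')) = P (symmDiff (C (g j')) (D j')) := by rw [hjj']
    have : P (symmDiff (D j) (D j')) ≤ 2 * ε := by
      rw [two_mul]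
      calc P (symmDiff (D j) (D j')) ≤ _ := htri
        _ ≤ ε + ε := by
          rw [h3, h4]
          exact add_le_add (hgspec j) (hgspec j')
    exact absurd this (not_le.mpr (hεD j j' hne))
  have := Fintype.card_le_of_injective f hfinj
  have := Fintype.card_le_of_injective g hginj
  simp only [Fintype.card_fin] at *
  omega
end

section
/- Let P be an absolutely continuous probability measure on ℝ with distribution function F. Let m_1 < ⋯ < m_{r−1} and consider the interval clustering 𝒞 = {(m_0, m_1), …, (m_{r−1}, m_r)} of P, with m_0 = −∞ and m_r = +∞. Then there exists δ > 0 such that for any points m̂_1 < ⋯ < m̂_{r−1} with |m̂_j − m_j| ≤ δ for all j, the interval clustering 𝒟 = {(m̂_0, m̂_1), …, (m̂_{r−1}, m̂_r)} (with m̂_0 = −∞, m̂_r = +∞) satisfies d_P(𝒞,𝒟) = Σ_{j=1}^{r−1} |F(m̂_j) − F(m_j)|. -/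
open MeasureTheory Set
open scoped ENNReal

/-- The distribution function of a probability measure `P` on `ℝ`. -/
noncomputable def distFun (P : Measure ℝ) (x : ℝ) : ℝ :=
  (P (Set.Iic x)).toReal

/-!
Push `P` forward to the extended reals. There the clusters are the intervals between consecutive
cut points `-∞ = a₀ ≤ a₁ ≤ ⋯ ≤ a_r = +∞`, and since `P` has no atoms they may be taken half-open.
Let `T` be the total mass lying between corresponding cut points `a_k` and `â_k`. As soon as `3T`
is below the mass of every cluster, matched clusters overlap, and then `(a, b] ∆ (a', b']` is the
disjoint union of the gaps between `a, a'` and between `b, b'`: the identity matching costs exactly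
`2T`. Any other matching pairs some `C_i` with a `D_j`, `j ≠ i`, meeting it only inside one gap, so
it costs at least `P(C_i) - T > 2T`. Finally `T → 0` as `δ → 0`, because `P` has no atoms.
-/

open Filter Topology
open scoped Interval symmDiff

theorem Fin.sum_castSucc_add_succ {M : Type*} [AddCommMonoid M] {N : ℕ} (g : Fin (N + 1) → M)
    (h0 : g 0 = 0) (hN : g (Fin.last N) = 0) :
    ∑ i : Fin N, (g i.castSucc + g i.succ) = 2 • ∑ k, g k := by
  rw [Finset.sum_add_distrib, two_nsmul]
  nth_rw 1 [Fin.sum_univ_castSucc g]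
  rw [Fin.sum_univ_succ g, hN, h0, add_zero, zero_add]

theorem clusterDistP_congr_ae {X : Type*} [MeasurableSpace X] {r : ℕ} {μ : Measure X}
    {C C' D D' : Fin r → Set X} (hC : ∀ i, C i =ᵐ[μ] C' i) (hD : ∀ i, D i =ᵐ[μ] D' i) :
    clusterDistP μ C D = clusterDistP μ C' D' := by
  simp only [clusterDistP, measure_congr ((hC _).symmDiff (hD _))]

theorem clusterDistP_map {X Y : Type*} [MeasurableSpace X] [MeasurableSpace Y] {r : ℕ}
    {μ : Measure X} {f : X → Y} (hf : MeasurableEmbedding f) (C D : Fin r → Set Y) :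
    clusterDistP (μ.map f) C D = clusterDistP μ (fun i => f ⁻¹' C i) (fun i => f ⁻¹' D i) := by
  simp only [clusterDistP, hf.map_apply, preimage_symmDiff]

section LinearOrder

variable {α : Type*} [LinearOrder α]

theorem Ioc_symmDiff_Ioc_eq_uIoc_union {a b a' b' : α} (h : a < b') (h' : a' < b) :
    Ioc a b ∆ Ioc a' b' = Ι a a' ∪ Ι b b' := by
  ext x
  simp only [mem_symmDiff, mem_Ioc, mem_union, uIoc, min_lt_iff, le_max_iff]
  grind

theorem Ioc_subset_uIoc_of_le_left {a b c : α} (h : b ≤ c) : Ioc a b ⊆ Ι a c :=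
  (Ioc_subset_Ioc_right h).trans Ioc_subset_uIoc

theorem Ioc_subset_uIoc_of_le_right {a b c : α} (h : c ≤ a) : Ioc a b ⊆ Ι b c :=
  (Ioc_subset_Ioc_left h).trans Ioc_subset_uIoc'

variable {N : ℕ} {a b : Fin (N + 1) → α}

theorem exists_Ioc_inter_Ioc_subset_uIoc (hb : Monotone b) {i j : Fin N} (hij : i ≠ j) :
    ∃ k, Ioc (a i.castSucc) (a i.succ) ∩ Ioc (b j.castSucc) (b j.succ) ⊆ Ι (a k) (b k) := by
  rcases hij.lt_or_gt with h | h
  · exact ⟨i.succ, fun x hx =>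
      Ioc_subset_uIoc' ⟨(hb (Fin.succ_le_castSucc_iff.2 h)).trans_lt hx.2.1, hx.1.2⟩⟩
  · exact ⟨i.castSucc, fun x hx =>
      Ioc_subset_uIoc ⟨hx.1.1, hx.2.2.trans (hb (Fin.succ_le_castSucc_iff.2 h))⟩⟩

variable [MeasurableSpace α] {μ : Measure α}

theorem lt_of_measure_uIoc_lt_measure_Ioc {a b b' : α} (h : μ (Ι b b') < μ (Ioc a b)) :
    a < b' := by
  by_contra! hb'
  exact (measure_mono (Ioc_subset_uIoc_of_le_right hb')).not_gt h

theorem lt_of_measure_uIoc_lt_measure_Ioc' {a b a' : α} (h : μ (Ι a a') < μ (Ioc a b)) :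
    a' < b := by
  by_contra! ha'
  exact (measure_mono (Ioc_subset_uIoc_of_le_left ha')).not_gt h

theorem two_mul_sum_lt_sum_measure_Ioc_symmDiff_Ioc (hb : Monotone b)
    (hsmall : ∀ i : Fin N, 3 * ∑ k, μ (Ι (a k) (b k)) < μ (Ioc (a i.castSucc) (a i.succ)))
    {σ : Equiv.Perm (Fin N)} (hσ : σ ≠ 1) :
    2 * ∑ k, μ (Ι (a k) (b k)) <
      ∑ i, μ (Ioc (a i.castSucc) (a i.succ) ∆ Ioc (b (σ i).castSucc) (b (σ i).succ)) := by
  obtain ⟨i, hi⟩ : ∃ i, σ i ≠ i := not_forall.1 fun h => hσ (Equiv.ext h)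
  obtain ⟨k, hk⟩ := exists_Ioc_inter_Ioc_subset_uIoc (a := a) hb hi.symm
  have hk_le := Finset.single_le_sum (f := fun k => μ (Ι (a k) (b k))) (fun _ _ => zero_le)
    (Finset.mem_univ k)
  have hi_le := Finset.single_le_sum (f := fun i =>
    μ (Ioc (a i.castSucc) (a i.succ) ∆ Ioc (b (σ i).castSucc) (b (σ i).succ))) (fun _ _ => zero_le)
    (Finset.mem_univ i)
  set T := ∑ k, μ (Ι (a k) (b k))
  set C := Ioc (a i.castSucc) (a i.succ)
  set D := Ioc (b (σ i).castSucc) (b (σ i).succ)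
  refine lt_of_add_lt_add_right (a := T) ?_
  calc 2 * T + T = 3 * T := by ring
    _ < μ C := hsmall i
    _ ≤ μ (C ∩ D) + μ (C \ D) := measure_le_inter_add_sdiff _ _ _
    _ ≤ T + μ (C ∆ D) :=
      add_le_add ((measure_mono hk).trans hk_le) (measure_mono fun x hx => Or.inl hx)
    _ ≤ _ := (add_le_add_right hi_le T).trans_eq (add_comm _ _)

variable [TopologicalSpace α] [OrderClosedTopology α] [OpensMeasurableSpace α]

theorem measure_Ioc_symmDiff_Ioc {a b a' b' : α} (hab : a ≤ b) (hab' : a' ≤ b') (h : a < b')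
    (h' : a' < b) : μ (Ioc a b ∆ Ioc a' b') = μ (Ι a a') + μ (Ι b b') := by
  rw [Ioc_symmDiff_Ioc_eq_uIoc_union h h']
  refine measure_union ?_ measurableSet_Ioc
  rw [uIoc, uIoc, Ioc_disjoint_Ioc]
  exact (min_le_left _ _).trans ((le_min (max_le hab h'.le) (max_le h.le hab')).trans
    (le_max_right _ _))

theorem sum_measure_Ioc_symmDiff_Ioc (ha : Monotone a) (hb : Monotone b) (h0 : a 0 = b 0)
    (hN : a (Fin.last N) = b (Fin.last N))
    (hsmall : ∀ i : Fin N, 3 * ∑ k, μ (Ι (a k) (b k)) < μ (Ioc (a i.castSucc) (a i.succ))) :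
    ∑ i : Fin N, μ (Ioc (a i.castSucc) (a i.succ) ∆ Ioc (b i.castSucc) (b i.succ)) =
      2 * ∑ k, μ (Ι (a k) (b k)) := by
  have hgap : ∀ k (i : Fin N), μ (Ι (a k) (b k)) < μ (Ioc (a i.castSucc) (a i.succ)) :=
    fun k i =>
      ((Finset.single_le_sum (fun _ _ => zero_le) (Finset.mem_univ k)).trans
        (le_mul_of_one_le_left zero_le (by norm_num))).trans_lt (hsmall i)
  calc _ = ∑ i : Fin N, (μ (Ι (a i.castSucc) (b i.castSucc)) + μ (Ι (a i.succ) (b i.succ))) :=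
        Finset.sum_congr rfl fun i _ => measure_Ioc_symmDiff_Ioc (ha i.castSucc_le_succ)
          (hb i.castSucc_le_succ) (lt_of_measure_uIoc_lt_measure_Ioc (hgap i.succ i))
          (lt_of_measure_uIoc_lt_measure_Ioc' (hgap i.castSucc i))
    _ = 2 * ∑ k, μ (Ι (a k) (b k)) := by
        rw [Fin.sum_castSucc_add_succ (fun k => μ (Ι (a k) (b k))) (by simp [h0]) (by simp [hN]),
          nsmul_eq_mul, Nat.cast_ofNat]

theorem clusterDistP_Ioc_eq_sum_measure_uIoc (ha : Monotone a) (hb : Monotone b)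
    (h0 : a 0 = b 0) (hN : a (Fin.last N) = b (Fin.last N))
    (hsmall : ∀ i : Fin N, 3 * ∑ k, μ (Ι (a k) (b k)) < μ (Ioc (a i.castSucc) (a i.succ))) :
    clusterDistP μ (fun i => Ioc (a i.castSucc) (a i.succ))
      (fun i => Ioc (b i.castSucc) (b i.succ)) = ∑ k, μ (Ι (a k) (b k)) := by
  have hid := sum_measure_Ioc_symmDiff_Ioc ha hb h0 hN hsmall
  have hinf : ⨅ σ : Equiv.Perm (Fin N),
      ∑ i, μ (Ioc (a i.castSucc) (a i.succ) ∆ Ioc (b (σ i).castSucc) (b (σ i).succ)) =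
        2 * ∑ k, μ (Ι (a k) (b k)) := by
    refine le_antisymm ((iInf_le _ 1).trans_eq hid) (le_iInf fun σ => ?_)
    rcases eq_or_ne σ 1 with rfl | hσ
    · exact hid.ge
    · exact (two_mul_sum_lt_sum_measure_Ioc_symmDiff_Ioc hb hsmall hσ).le
  rw [clusterDistP, hinf, mul_comm, ENNReal.mul_div_cancel_right two_ne_zero ENNReal.ofNat_ne_top]

end LinearOrder

section Real

theorem monotone_distFun (P : Measure ℝ) [IsFiniteMeasure P] : Monotone (distFun P) :=
  fun _ _ h => ENNReal.toReal_mono (measure_ne_top _ _) (measure_mono (Iic_subset_Iic.2 h))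

theorem toReal_measure_uIoc (P : Measure ℝ) [IsFiniteMeasure P] (u v : ℝ) :
    (P (Ι u v)).toReal = |distFun P v - distFun P u| := by
  have hle : Iic (min u v) ⊆ Iic (max u v) := Iic_subset_Iic.2 min_le_max
  rw [uIoc, ← Iic_sdiff_Iic, measure_sdiff hle nullMeasurableSet_Iic (measure_ne_top _ _),
    ENNReal.toReal_sub_of_le (measure_mono hle) (measure_ne_top _ _)]
  change distFun P (max u v) - distFun P (min u v) = _
  rw [(monotone_distFun P).map_max, (monotone_distFun P).map_min, max_sub_min_eq_abs]

theorem uIoc_subset_Icc_of_abs_sub_le {x y δ : ℝ} (h : |y - x| ≤ δ) :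
    Ι x y ⊆ Icc (x - δ) (x + δ) := by
  have := abs_le.1 h
  exact uIoc_subset_uIcc.trans
    (uIcc_subset_Icc ⟨by linarith, by linarith⟩ ⟨by linarith, by linarith⟩)

instance nullSingletonClass_map_toEReal (P : Measure ℝ) [NullSingletonClass P] :
    NullSingletonClass (P.map Real.toEReal) where
  measure_singleton x := by
    rw [EReal.measurableEmbedding_coe.map_apply]
    exact (subsingleton_singleton.preimage EReal.coe_injective).measure_zero P

theorem map_toEReal_uIoc_coe (P : Measure ℝ) (u v : ℝ) :
    P.map Real.toEReal (Ι (u : EReal) v) = P (Ι u v) := by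
  rw [EReal.measurableEmbedding_coe.map_apply, uIoc, uIoc, ← EReal.coe_strictMono.monotone.map_min,
    ← EReal.coe_strictMono.monotone.map_max, EReal.preimage_coe_Ioc]

variable {n : ℕ}

/-- The cluster boundaries `⊥, m 0, …, m (n - 1), ⊤`: cluster `i` lies between entries `i` and
`i + 1`. -/
noncomputable def extendedCut (m : Fin n → ℝ) (k : Fin (n + 2)) : EReal :=
  if h : (k : ℕ) = 0 then ⊥ else if h' : (k : ℕ) ≤ n then m ⟨k - 1, by omega⟩ else ⊤

variable {m : Fin n → ℝ}

@[simp] theorem extendedCut_zero : extendedCut m 0 = ⊥ := by simp [extendedCut]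

@[simp] theorem extendedCut_last : extendedCut m (Fin.last (n + 1)) = ⊤ := by simp [extendedCut]

@[simp] theorem extendedCut_succ_castSucc (j : Fin n) : extendedCut m j.castSucc.succ = m j := by
  simp [extendedCut]

theorem monotone_extendedCut (hm : Monotone m) : Monotone (extendedCut m) := by
  intro k l hkl
  have hkl' : (k : ℕ) ≤ l := hkl
  unfold extendedCut
  split_ifs <;> first | exact bot_le | exact le_top | omega | skip
  exact EReal.coe_le_coe_iff.2 (hm (Fin.mk_le_mk.2 (by omega)))

theorem extendedCut_castSucc_lt_coe_iff (hm : Monotone m) (i : Fin (n + 1)) (x : ℝ) :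
    extendedCut m i.castSucc < x ↔ ∀ j : Fin n, (j : ℕ) < i → m j < x := by
  unfold extendedCut
  split_ifs with h0 hn
  · simp only [EReal.bot_lt_coe, true_iff]
    intro j hj
    rw [Fin.val_castSucc] at h0
    omega
  · rw [Fin.val_castSucc] at h0
    rw [EReal.coe_lt_coe_iff]
    refine ⟨fun h j hj => (hm (Fin.le_iff_val_le_val.2 ?_)).trans_lt h, fun h => h _ ?_⟩
    · change (j : ℕ) ≤ i - 1
      omega
    · change (i : ℕ) - 1 < i
      omega
  · exact absurd i.is_le hn

theorem coe_lt_extendedCut_succ_iff (hm : Monotone m) (i : Fin (n + 1)) (x : ℝ) :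
    (x : EReal) < extendedCut m i.succ ↔ ∀ j : Fin n, (i : ℕ) ≤ j → x < m j := by
  unfold extendedCut
  split_ifs with h0 hn
  · simp at h0
  · rw [EReal.coe_lt_coe_iff]
    refine ⟨fun h j hj => h.trans_le (hm (Fin.le_iff_val_le_val.2 ?_)), fun h => h _ ?_⟩
    · change (i : ℕ) + 1 - 1 ≤ j
      omega
    · change (i : ℕ) ≤ i + 1 - 1
      omega
  · simp only [EReal.coe_lt_top, true_iff]
    intro j hj
    simp only [Fin.val_succ] at hn
    omega

theorem intervalClusters_eq_preimage_Ioo (hm : Monotone m) (i : Fin (n + 1)) :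
    intervalClusters (n + 1) m i =
      Real.toEReal ⁻¹' Ioo (extendedCut m i.castSucc) (extendedCut m i.succ) := by
  ext x
  simp only [intervalClusters, mem_ofPred_eq, mem_preimage, mem_Ioo,
    extendedCut_castSucc_lt_coe_iff hm, coe_lt_extendedCut_succ_iff hm]
  exact Iff.rfl

theorem sum_extendedCut {M : Type*} [AddCommMonoid M] (g : EReal → EReal → M) (hbot : g ⊥ ⊥ = 0)
    (htop : g ⊤ ⊤ = 0) (m' : Fin n → ℝ) :
    ∑ k, g (extendedCut m k) (extendedCut m' k) = ∑ j, g (m j) (m' j) := by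
  rw [Fin.sum_univ_succ, Fin.sum_univ_castSucc]
  simp [hbot, htop]

end Real

theorem clusterDistP_intervalClusters_eq_sum (P : Measure ℝ) [NullSingletonClass P] {n : ℕ}
    {m m' : Fin n → ℝ} (hm : Monotone m) (hm' : Monotone m')
    (hsmall : ∀ i, 3 * ∑ j, P (Ι (m j) (m' j)) < P (intervalClusters (n + 1) m i)) :
    clusterDistP P (intervalClusters (n + 1) m) (intervalClusters (n + 1) m') =
      ∑ j, P (Ι (m j) (m' j)) := by
  have hgaps : ∑ k, P.map Real.toEReal (Ι (extendedCut m k) (extendedCut m' k)) =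
      ∑ j, P (Ι (m j) (m' j)) := by
    rw [sum_extendedCut (fun u v => P.map Real.toEReal (Ι u v)) (by simp) (by simp)]
    simp only [map_toEReal_uIoc_coe]
  have hmass : ∀ i, P (intervalClusters (n + 1) m i) =
      P.map Real.toEReal (Ioc (extendedCut m i.castSucc) (extendedCut m i.succ)) := fun i => by
    rw [← measure_congr Ioo_ae_eq_Ioc, EReal.measurableEmbedding_coe.map_apply,
      intervalClusters_eq_preimage_Ioo hm]
  rw [funext (intervalClusters_eq_preimage_Ioo hm), funext (intervalClusters_eq_preimage_Ioo hm'),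
    ← clusterDistP_map EReal.measurableEmbedding_coe,
    clusterDistP_congr_ae (fun _ => Ioo_ae_eq_Ioc) (fun _ => Ioo_ae_eq_Ioc),
    clusterDistP_Ioc_eq_sum_measure_uIoc (monotone_extendedCut hm) (monotone_extendedCut hm')
      (by simp) (by simp) fun i => by rw [hgaps, ← hmass]; exact hsmall i, hgaps]

/-- For an absolutely continuous probability measure `P` on `ℝ` with distribution function
`F`, and an interval clustering `𝒞` of `P` with cut points `m₁ < ⋯ < m_{r-1}`, there is
`δ > 0` such that for any cut points `m̂₁ < ⋯ < m̂_{r-1}` within `δ` of the `mⱼ`, the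
corresponding interval clustering `𝒟` satisfies `d_P(𝒞,𝒟) = Σⱼ |F(m̂ⱼ) − F(mⱼ)|`. -/
theorem clusterDistP_eq_sum_abs_distFun
    (P : Measure ℝ) [IsProbabilityMeasure P]
    (hac : P ≪ MeasureTheory.volume)
    (r : ℕ) (hr : 1 ≤ r)
    (m : Fin (r - 1) → ℝ) (hm_mono : StrictMono m)
    (hC : ∀ i, 0 < P (intervalClusters r m i)) :
    ∃ δ > 0, ∀ mhat : Fin (r - 1) → ℝ, StrictMono mhat →
      (∀ j, |mhat j - m j| ≤ δ) →
      (clusterDistP P (intervalClusters r m) (intervalClusters r mhat)).toReal =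
        ∑ j : Fin (r - 1), |distFun P (mhat j) - distFun P (m j)| := by
  obtain ⟨n, rfl⟩ : ∃ n, r = n + 1 := ⟨r - 1, by omega⟩
  have : NullSingletonClass P := ⟨fun _ => hac Real.volume_singleton⟩
  have hlim : Tendsto (fun δ => 3 * ∑ j, P (Icc (m j - δ) (m j + δ))) (𝓝 0) (𝓝 0) := by
    simpa using ENNReal.Tendsto.const_mul
      (tendsto_finsetSum Finset.univ fun j _ => tendsto_measure_Icc P (m j))
      (Or.inr ENNReal.ofNat_ne_top)
  obtain ⟨δ, hδ, hδpos⟩ := (((eventually_all.2 fun i => hlim.eventually_lt_const (hC i)).filter_mono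
    nhdsWithin_le_nhds).and (self_mem_nhdsWithin (s := Ioi 0))).exists
  refine ⟨δ, hδpos, fun mhat hmhat hclose => ?_⟩
  have hsmall : ∀ i, 3 * ∑ j, P (Ι (m j) (mhat j)) < P (intervalClusters (n + 1) m i) :=
    fun i => lt_of_le_of_lt (by gcongr with j; exact uIoc_subset_Icc_of_abs_sub_le (hclose j))
      (hδ i)
  rw [clusterDistP_intervalClusters_eq_sum (n := n) P hm_mono.monotone hmhat.monotone hsmall,
    ENNReal.toReal_sum fun _ _ => measure_ne_top _ _]
  exact Finset.sum_congr rfl fun j _ => toReal_measure_uIoc P (m j) (mhat j)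
end

section
/- Let P be an absolutely continuous probability measure on ℝ with distribution function F. Let m_1 < ⋯ < m_{r−1} and consider the interval clustering 𝒞 = {C_1, …, C_r} of P with C_i = (m_{i−1}, m_i), where m_0 = −∞ and m_r = +∞. Then there exists δ > 0 such that for any points m̂_1 < ⋯ < m̂_{r−1} with |m̂_j − m_j| ≤ δ for all j, the interval clustering 𝒟 = {D_1, …, D_r} with D_i = (m̂_{i−1}, m̂_i) satisfies d_H(𝒞,𝒟) = max_{i=1,…,r} P(C_i △ D_i) = max_{i=1,…,r} ( |F(m̂_{i−1}) − F(m_{i−1})| + |F(m̂_i) − F(m_i)| ), where the terms indexed by 0 and r are taken to be zero; in particular, max_{j=1,…,r−1} |F(m̂_j) − F(m_j)| ≤ d_H(𝒞,𝒟) ≤ 2 max_{j=1,…,r−1} |F(m̂_j) − F(m_j)|. -/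
open MeasureTheory Set
open scoped ENNReal

/-- `|F(m̂ⱼ) − F(mⱼ)|` for a cut index `j < r - 1`, and `0` for the out-of-range indices
(corresponding to the boundary terms indexed by `0` and `r`, which are taken to be zero). -/
noncomputable def cutDiff (P : Measure ℝ) (r : ℕ) (m mhat : Fin (r - 1) → ℝ) (j : ℕ) : ℝ :=
  if h : j < r - 1 then |distFun P (mhat ⟨j, h⟩) - distFun P (m ⟨j, h⟩)| else 0

section Aux
variable (P : Measure ℝ) [IsProbabilityMeasure P]

lemma distFun_mono' : Monotone (distFun P) := fun a b hab =>
  ENNReal.toReal_mono (measure_ne_top _ _) (measure_mono (Set.Iic_subset_Iic.2 hab))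

lemma meas_Ioc' (a b : ℝ) : P (Set.Ioc a b) = ENNReal.ofReal (distFun P b - distFun P a) := by
  rcases le_or_gt a b with h | h
  · have hu : P (Set.Iic b) = P (Set.Iic a) + P (Set.Ioc a b) := by
      rw [← Set.Iic_union_Ioc_eq_Iic h, measure_union (Set.Iic_disjoint_Ioc le_rfl) measurableSet_Ioc]
    have h2 : distFun P b - distFun P a = (P (Set.Ioc a b)).toReal := by
      simp only [distFun, hu, ENNReal.toReal_add (measure_ne_top _ _) (measure_ne_top _ _)]
      ring
    rw [h2, ENNReal.ofReal_toReal (measure_ne_top _ _)]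
  · have hle : distFun P b - distFun P a ≤ 0 := sub_nonpos.2 (distFun_mono' P h.le)
    rw [Set.Ioc_eq_empty (not_lt.2 h.le), measure_empty, ENNReal.ofReal_of_nonpos hle]

lemma meas_Ioo' (hpt : ∀ x : ℝ, P {x} = 0) (a b : ℝ) :
    P (Set.Ioo a b) = ENNReal.ofReal (distFun P b - distFun P a) := by
  have h1 : P (Set.Ioc a b) ≤ P (Set.Ioo a b) := by
    calc P (Set.Ioc a b) ≤ P (Set.Ioo a b ∪ {b}) := measure_mono (fun x hx => by
          rcases lt_or_eq_of_le hx.2 with h | h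
          · exact Or.inl ⟨hx.1, h⟩
          · exact Or.inr (by simp [h])
        )
      _ ≤ P (Set.Ioo a b) + P {b} := measure_union_le _ _
      _ = P (Set.Ioo a b) := by rw [hpt, add_zero]
  rw [← meas_Ioc' P a b]
  exact le_antisymm (measure_mono Set.Ioo_subset_Ioc_self) h1

lemma meas_Ico' (hpt : ∀ x : ℝ, P {x} = 0) (a b : ℝ) :
    P (Set.Ico a b) = ENNReal.ofReal (distFun P b - distFun P a) := by
  have h1 : P (Set.Ico a b) ≤ P (Set.Ioo a b) := by
    calc P (Set.Ico a b) ≤ P (Set.Ioo a b ∪ {a}) := measure_mono (fun x hx => by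
          rcases eq_or_lt_of_le hx.1 with h | h
          · exact Or.inr (by simp [h.symm])
          · exact Or.inl ⟨h, hx.2⟩)
      _ ≤ P (Set.Ioo a b) + P {a} := measure_union_le _ _
      _ = P (Set.Ioo a b) := by rw [hpt, add_zero]
  rw [← meas_Ioo' P hpt a b]
  exact le_antisymm h1 (measure_mono Set.Ioo_subset_Ico_self)

lemma ofReal_add_ofReal_neg (t : ℝ) :
    ENNReal.ofReal t + ENNReal.ofReal (-t) = ENNReal.ofReal |t| := by
  rcases le_total 0 t with h | h
  · rw [show ENNReal.ofReal (-t) = 0 from ENNReal.ofReal_of_nonpos (by linarith), add_zero,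
      abs_of_nonneg h]
  · rw [ENNReal.ofReal_of_nonpos h, zero_add, abs_of_nonpos h]

lemma meas_symm_Iio (hpt : ∀ x : ℝ, P {x} = 0) (a b : ℝ) :
    P (symmDiff (Set.Iio a) (Set.Iio b)) = ENNReal.ofReal |distFun P b - distFun P a| := by
  have e1 : Set.Iio a \ Set.Iio b = Set.Ico b a := by
    ext x; simp only [mem_diff, mem_Iio, not_lt, mem_Ico]; exact and_comm
  have e2 : Set.Iio b \ Set.Iio a = Set.Ico a b := by
    ext x; simp only [mem_diff, mem_Iio, not_lt, mem_Ico]; exact and_comm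
  rw [Set.symmDiff_def, measure_union disjoint_sdiff_sdiff
      (measurableSet_Iio.diff measurableSet_Iio), e1, e2, meas_Ico' P hpt, meas_Ico' P hpt]
  rw [show distFun P a - distFun P b = -(distFun P b - distFun P a) by ring, add_comm,
    ofReal_add_ofReal_neg]

lemma meas_symm_Ioi (a b : ℝ) :
    P (symmDiff (Set.Ioi a) (Set.Ioi b)) = ENNReal.ofReal |distFun P b - distFun P a| := by
  have e1 : Set.Ioi a \ Set.Ioi b = Set.Ioc a b := by
    ext x; simp only [mem_diff, mem_Ioi, not_lt, mem_Ioc]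
  have e2 : Set.Ioi b \ Set.Ioi a = Set.Ioc b a := by
    ext x; simp only [mem_diff, mem_Ioi, not_lt, mem_Ioc]
  rw [Set.symmDiff_def, measure_union disjoint_sdiff_sdiff
      (measurableSet_Ioi.diff measurableSet_Ioi), e1, e2, meas_Ioc' P, meas_Ioc' P]
  rw [show distFun P a - distFun P b = -(distFun P b - distFun P a) by ring,
    ofReal_add_ofReal_neg]

lemma Ioo_sdiff_Ioo' {l u l' u' : ℝ} (h1 : l < u') (h2 : l' < u) :
    Set.Ioo l u \ Set.Ioo l' u' = Set.Ioc l l' ∪ Set.Ico u' u := by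
  ext x
  simp only [mem_diff, mem_Ioo, mem_union, mem_Ioc, mem_Ico, not_and, not_lt]
  constructor
  · rintro ⟨⟨hlx, hxu⟩, hn⟩
    by_cases hx : x ≤ l'
    · exact Or.inl ⟨hlx, hx⟩
    · exact Or.inr ⟨hn (lt_of_not_ge hx), hxu⟩
  · rintro (⟨ha, hb⟩ | ⟨ha, hb⟩)
    · exact ⟨⟨ha, lt_of_le_of_lt hb h2⟩, fun hc => absurd hb (not_le.2 hc)⟩
    · exact ⟨⟨lt_of_lt_of_le h1 ha, hb⟩, fun _ => ha⟩

lemma meas_symm_Ioo (hpt : ∀ x : ℝ, P {x} = 0) {l u l' u' : ℝ}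
    (hlu : l < u) (hl'u' : l' < u') (h1 : l < u') (h2 : l' < u) :
    P (symmDiff (Set.Ioo l u) (Set.Ioo l' u')) =
      ENNReal.ofReal (|distFun P l' - distFun P l| + |distFun P u' - distFun P u|) := by
  have hd1 : Disjoint (Set.Ioc l l') (Set.Ico u' u) :=
    Set.disjoint_left.2 fun x hx hy => absurd hl'u' (not_lt.2 (le_trans hy.1 hx.2))
  have hd2 : Disjoint (Set.Ioc l' l) (Set.Ico u u') :=
    Set.disjoint_left.2 fun x hx hy => absurd hlu (not_lt.2 (le_trans hy.1 hx.2))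
  rw [Set.symmDiff_def, measure_union disjoint_sdiff_sdiff
      (measurableSet_Ioo.diff measurableSet_Ioo),
      Ioo_sdiff_Ioo' h1 h2, Ioo_sdiff_Ioo' h2 h1,
      measure_union hd1 measurableSet_Ico, measure_union hd2 measurableSet_Ico,
      meas_Ioc' P, meas_Ioc' P, meas_Ico' P hpt, meas_Ico' P hpt]
  rw [show distFun P l - distFun P l' = -(distFun P l' - distFun P l) by ring,
      show distFun P u - distFun P u' = -(distFun P u' - distFun P u) by ring]
  calc (ENNReal.ofReal (distFun P l' - distFun P l) + ENNReal.ofReal (-(distFun P u' - distFun P u)))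
        + (ENNReal.ofReal (-(distFun P l' - distFun P l)) + ENNReal.ofReal (distFun P u' - distFun P u))
      = (ENNReal.ofReal (distFun P l' - distFun P l) + ENNReal.ofReal (-(distFun P l' - distFun P l)))
        + (ENNReal.ofReal (distFun P u' - distFun P u) + ENNReal.ofReal (-(distFun P u' - distFun P u))) := by
        ring
    _ = ENNReal.ofReal |distFun P l' - distFun P l| + ENNReal.ofReal |distFun P u' - distFun P u| := by
        rw [ofReal_add_ofReal_neg, ofReal_add_ofReal_neg]
    _ = ENNReal.ofReal (|distFun P l' - distFun P l| + |distFun P u' - distFun P u|) :=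
        (ENNReal.ofReal_add (abs_nonneg _) (abs_nonneg _)).symm

lemma exists_small_collar (hpt : ∀ x : ℝ, P {x} = 0) (x : ℝ) {ε : ℝ≥0∞} (hε : 0 < ε) :
    ∃ η > 0, P (Set.Icc (x - η) (x + η)) < ε := by
  have h0 : P {x} < ε := by rw [hpt]; exact hε
  obtain ⟨U, hxU, hUopen, hUlt⟩ := exists_isOpen_lt_of_lt {x} ε h0
  obtain ⟨ρ, hρ, hball⟩ := Metric.isOpen_iff.1 hUopen x (singleton_subset_iff.1 hxU)
  refine ⟨ρ/2, by positivity, lt_of_le_of_lt (measure_mono ?_) hUlt⟩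
  intro y hy
  apply hball
  rw [Metric.mem_ball, Real.dist_eq, abs_sub_lt_iff]
  constructor <;> [linarith [hy.2]; linarith [hy.1]]

end Aux

section Shape
variable {r : ℕ} {m : Fin (r - 1) → ℝ}

lemma shape_univ (i : Fin r) (h0 : (i : ℕ) = 0) (hge : ¬ (i : ℕ) < r - 1) :
    intervalClusters r m i = Set.univ := by
  ext x
  simp only [intervalClusters, Set.mem_setOf_eq, Set.mem_univ, iff_true]
  constructor
  · intro j hj; exact absurd j.isLt (by omega)
  · intro j hj; exact absurd j.isLt (by omega)

lemma shape_left (hm : StrictMono m) (i : Fin r) (h0 : (i : ℕ) = 0) (hlt : (i : ℕ) < r - 1) :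
    intervalClusters r m i = Set.Iio (m ⟨(i : ℕ), hlt⟩) := by
  ext x
  simp only [intervalClusters, Set.mem_setOf_eq, Set.mem_Iio]
  constructor
  · rintro ⟨_, h2⟩
    exact h2 ⟨(i : ℕ), hlt⟩ le_rfl
  · intro hx
    refine ⟨fun j hj => absurd hj (by omega), fun j hj => lt_of_lt_of_le hx ?_⟩
    exact hm.monotone (Fin.le_def.2 hj)

lemma shape_right (hm : StrictMono m) (i : Fin r) (h0 : (i : ℕ) ≠ 0) (hge : ¬ (i : ℕ) < r - 1)
    (hidx : (i : ℕ) - 1 < r - 1) :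
    intervalClusters r m i = Set.Ioi (m ⟨(i : ℕ) - 1, hidx⟩) := by
  ext x
  simp only [intervalClusters, Set.mem_setOf_eq, Set.mem_Ioi]
  constructor
  · rintro ⟨h1, _⟩
    exact h1 ⟨(i : ℕ) - 1, hidx⟩ (show (i : ℕ) - 1 < (i : ℕ) by omega)
  · intro hx
    refine ⟨fun j hj => lt_of_le_of_lt (hm.monotone (Fin.le_def.2 ?_)) hx,
      fun j hj => absurd j.isLt (by omega)⟩
    show (j : ℕ) ≤ (i : ℕ) - 1
    omega

lemma shape_mid (hm : StrictMono m) (i : Fin r) (h0 : (i : ℕ) ≠ 0) (hlt : (i : ℕ) < r - 1)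
    (hidx : (i : ℕ) - 1 < r - 1) :
    intervalClusters r m i = Set.Ioo (m ⟨(i : ℕ) - 1, hidx⟩) (m ⟨(i : ℕ), hlt⟩) := by
  ext x
  simp only [intervalClusters, Set.mem_setOf_eq, Set.mem_Ioo]
  constructor
  · rintro ⟨h1, h2⟩
    exact ⟨h1 ⟨(i : ℕ) - 1, hidx⟩ (show (i : ℕ) - 1 < (i : ℕ) by omega),
      h2 ⟨(i : ℕ), hlt⟩ le_rfl⟩
  · rintro ⟨hx1, hx2⟩
    refine ⟨fun j hj => lt_of_le_of_lt (hm.monotone (Fin.le_def.2 (show (j : ℕ) ≤ (i : ℕ) - 1 by omega))) hx1,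
      fun j hj => lt_of_lt_of_le hx2 (hm.monotone (Fin.le_def.2 hj))⟩

end Shape

/-- For an absolutely continuous probability measure `P` on `ℝ` with distribution function
`F`, and an interval clustering `𝒞` of `P` with cut points `m₁ < ⋯ < m_{r-1}`, there is
`δ > 0` such that for any cut points `m̂₁ < ⋯ < m̂_{r-1}` within `δ` of the `mⱼ`, the
corresponding interval clustering `𝒟` satisfies
`d_H(𝒞,𝒟) = maxᵢ P(Cᵢ △ Dᵢ) = maxᵢ (|F(m̂_{i-1}) − F(m_{i-1})| + |F(m̂ᵢ) − F(mᵢ)|)`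
(boundary terms indexed by `0` and `r` being zero); in particular
`maxⱼ |F(m̂ⱼ) − F(mⱼ)| ≤ d_H(𝒞,𝒟) ≤ 2 maxⱼ |F(m̂ⱼ) − F(mⱼ)|`. -/
theorem clusterDistH_eq_max_abs_distFun
    (P : Measure ℝ) [IsProbabilityMeasure P]
    (hac : P ≪ MeasureTheory.volume)
    (r : ℕ) (hr : 1 ≤ r)
    (m : Fin (r - 1) → ℝ) (hm_mono : StrictMono m)
    (hC : ∀ i, 0 < P (intervalClusters r m i)) :
    ∃ δ > 0, ∀ mhat : Fin (r - 1) → ℝ, StrictMono mhat →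
      (∀ j, |mhat j - m j| ≤ δ) →
      ((clusterDistH P (intervalClusters r m) (intervalClusters r mhat)).toReal =
        ⨆ i : Fin r,
          (P (symmDiff (intervalClusters r m i) (intervalClusters r mhat i))).toReal) ∧
      ((clusterDistH P (intervalClusters r m) (intervalClusters r mhat)).toReal =
        ⨆ i : Fin r,
          ((if (i : ℕ) = 0 then 0 else cutDiff P r m mhat ((i : ℕ) - 1)) +
            cutDiff P r m mhat (i : ℕ))) ∧
      ((⨆ j : Fin (r - 1), |distFun P (mhat j) - distFun P (m j)|) ≤
        (clusterDistH P (intervalClusters r m) (intervalClusters r mhat)).toReal) ∧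
      ((clusterDistH P (intervalClusters r m) (intervalClusters r mhat)).toReal ≤
        2 * ⨆ j : Fin (r - 1), |distFun P (mhat j) - distFun P (m j)|) := by
  classical
  have hpt : ∀ x : ℝ, P {x} = 0 := fun x => hac (Real.volume_singleton)
  have hFmono : Monotone (distFun P) := distFun_mono' P
  -- minimal cluster mass
  obtain ⟨i0, -, hi0⟩ := Finset.exists_min_image (Finset.univ : Finset (Fin r))
      (fun i => P (intervalClusters r m i)) ⟨⟨0, hr⟩, Finset.mem_univ _⟩
  set b : ℝ := (P (intervalClusters r m i0)).toReal with hb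
  have hbpos : 0 < b := ENNReal.toReal_pos (hC i0).ne' (measure_ne_top _ _)
  have hbeta : ∀ i, ENNReal.ofReal b ≤ P (intervalClusters r m i) := by
    intro i
    rw [hb, ENNReal.ofReal_toReal (measure_ne_top _ _)]
    exact hi0 i (Finset.mem_univ i)
  -- collars
  have hcol : ∀ k : Fin (r - 1), ∃ η > 0,
      P (Set.Icc (m k - η) (m k + η)) < ENNReal.ofReal (b / 8) := fun k =>
    exists_small_collar P hpt (m k) (ENNReal.ofReal_pos.2 (by positivity))
  choose eta hetapos hetacol using hcol
  -- gaps
  have hgapfun : ∀ j : Fin (r - 1), ∃ gj > 0, ∀ h : (j : ℕ) + 1 < r - 1,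
      gj ≤ (m ⟨(j : ℕ) + 1, h⟩ - m j) / 3 := by
    intro j
    by_cases h : (j : ℕ) + 1 < r - 1
    · refine ⟨(m ⟨(j : ℕ) + 1, h⟩ - m j) / 3, ?_, fun _ => le_rfl⟩
      have := hm_mono (show j < ⟨(j : ℕ) + 1, h⟩ from Fin.lt_def.2 (Nat.lt_succ_self _))
      linarith
    · exact ⟨1, one_pos, fun hc => absurd hc h⟩
  choose g hgpos hgle using hgapfun
  set s : Finset ℝ := insert 1 ((Finset.univ.image eta) ∪ (Finset.univ.image g)) with hs
  have hsne : s.Nonempty := ⟨1, by simp [hs]⟩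
  set δ : ℝ := s.min' hsne with hδdef
  have hδ_mem : δ ∈ s := Finset.min'_mem s hsne
  have hδpos : 0 < δ := by
    have h := hδ_mem
    rw [hs] at h
    simp only [Finset.mem_insert, Finset.mem_union, Finset.mem_image, Finset.mem_univ,
      true_and] at h
    rcases h with h | ⟨k, hk⟩ | ⟨k, hk⟩
    · rw [h]; exact one_pos
    · rw [← hk]; exact hetapos k
    · rw [← hk]; exact hgpos k
  have hδeta : ∀ k, δ ≤ eta k := by
    intro k
    refine Finset.min'_le s _ ?_
    rw [hs]
    simp only [Finset.mem_insert, Finset.mem_union, Finset.mem_image, Finset.mem_univ, true_and]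
    exact Or.inr (Or.inl ⟨k, rfl⟩)
  have hδg : ∀ j, δ ≤ g j := by
    intro j
    refine Finset.min'_le s _ ?_
    rw [hs]
    simp only [Finset.mem_insert, Finset.mem_union, Finset.mem_image, Finset.mem_univ, true_and]
    exact Or.inr (Or.inr ⟨j, rfl⟩)
  have hgap : ∀ (j k : Fin (r - 1)), (j : ℕ) + 1 = (k : ℕ) → m j + δ < m k - δ := by
    intro j k hjk
    have hklt : (j : ℕ) + 1 < r - 1 := by have := k.isLt; omega
    have hke : k = ⟨(j : ℕ) + 1, hklt⟩ := Fin.ext hjk.symm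
    have h1 : δ ≤ (m ⟨(j : ℕ) + 1, hklt⟩ - m j) / 3 := le_trans (hδg j) (hgle j hklt)
    rw [hke]
    linarith
  refine ⟨δ, hδpos, ?_⟩
  intro mhat hmhat hclose
  have hclose2 : ∀ k : Fin (r - 1), m k - δ ≤ mhat k ∧ mhat k ≤ m k + δ := by
    intro k
    have h := abs_le.1 (hclose k)
    constructor <;> linarith [h.1, h.2]
  have hcolδ : ∀ k : Fin (r - 1),
      P (Set.Icc (m k - δ) (m k + δ)) < ENNReal.ofReal (b / 8) := by
    intro k
    refine lt_of_le_of_lt (measure_mono (Set.Icc_subset_Icc ?_ ?_)) (hetacol k) <;>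
      linarith [hδeta k]
  -- bound on |F(mhat k) - F(m k)|
  have key : ∀ k : Fin (r - 1), |distFun P (mhat k) - distFun P (m k)| ≤ b / 8 := by
    intro k
    have h1 : distFun P (m k - δ) ≤ distFun P (mhat k) := hFmono (hclose2 k).1
    have h2 : distFun P (mhat k) ≤ distFun P (m k + δ) := hFmono (hclose2 k).2
    have h3 : distFun P (m k - δ) ≤ distFun P (m k) := hFmono (by linarith [hδpos])
    have h4 : distFun P (m k) ≤ distFun P (m k + δ) := hFmono (by linarith [hδpos])
    have h5 : distFun P (m k + δ) - distFun P (m k - δ) < b / 8 := by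
      have hh := lt_of_le_of_lt (measure_mono (Set.Ioc_subset_Icc_self)) (hcolδ k)
      rw [meas_Ioc' P] at hh
      exact (ENNReal.ofReal_lt_ofReal_iff (by positivity)).1 hh
    rw [abs_sub_le_iff]
    constructor <;> linarith
  have hcd : ∀ k : ℕ, cutDiff P r m mhat k ≤ b / 8 := by
    intro k
    rw [cutDiff]
    split
    · exact key _
    · positivity
  have hcd0 : ∀ k : ℕ, 0 ≤ cutDiff P r m mhat k := by
    intro k
    rw [cutDiff]
    split
    · exact abs_nonneg _
    · exact le_rfl
  have hterm0 : ∀ i : Fin r, 0 ≤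
      (if (i : ℕ) = 0 then 0 else cutDiff P r m mhat ((i : ℕ) - 1)) + cutDiff P r m mhat (i : ℕ) := by
    intro i
    have h1 := hcd0 ((i : ℕ) - 1); have h2 := hcd0 (i : ℕ)
    split_ifs <;> linarith
  have hterm : ∀ i : Fin r,
      (if (i : ℕ) = 0 then 0 else cutDiff P r m mhat ((i : ℕ) - 1)) + cutDiff P r m mhat (i : ℕ)
        ≤ b / 4 := by
    intro i
    have h1 := hcd ((i : ℕ) - 1); have h2 := hcd (i : ℕ)
    split_ifs <;> linarith
  -- diagonal computation
  have hdiag : ∀ i : Fin r,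
      P (symmDiff (intervalClusters r m i) (intervalClusters r mhat i)) =
        ENNReal.ofReal
          ((if (i : ℕ) = 0 then 0 else cutDiff P r m mhat ((i : ℕ) - 1)) +
            cutDiff P r m mhat (i : ℕ)) := by
    intro i
    by_cases h0 : (i : ℕ) = 0 <;> by_cases hlt : (i : ℕ) < r - 1
    · rw [shape_left hm_mono i h0 hlt, shape_left hmhat i h0 hlt, meas_symm_Iio P hpt,
        if_pos h0, cutDiff, dif_pos hlt, zero_add]
    · rw [shape_univ i h0 hlt, shape_univ i h0 hlt, symmDiff_self, if_pos h0, cutDiff,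
        dif_neg hlt, zero_add]
      simp
    · have hidx : (i : ℕ) - 1 < r - 1 := by have := i.isLt; omega
      have hcons : ((⟨(i : ℕ) - 1, hidx⟩ : Fin (r - 1)) : ℕ) + 1 =
          ((⟨(i : ℕ), hlt⟩ : Fin (r - 1)) : ℕ) := by simp; omega
      have hg2 := hgap ⟨(i : ℕ) - 1, hidx⟩ ⟨(i : ℕ), hlt⟩ hcons
      have hcl1 := hclose2 ⟨(i : ℕ) - 1, hidx⟩
      have hcl2 := hclose2 ⟨(i : ℕ), hlt⟩
      rw [shape_mid hm_mono i h0 hlt hidx, shape_mid hmhat i h0 hlt hidx,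
        meas_symm_Ioo P hpt (by linarith [hδpos]) (by linarith [hδpos])
          (by linarith [hδpos]) (by linarith [hδpos]),
        if_neg h0, cutDiff, cutDiff, dif_pos hidx, dif_pos hlt]
    · have hidx : (i : ℕ) - 1 < r - 1 := by have := i.isLt; omega
      rw [shape_right hm_mono i h0 hlt hidx, shape_right hmhat i h0 hlt hidx,
        meas_symm_Ioi P, if_neg h0, cutDiff, cutDiff, dif_pos hidx, dif_neg hlt, add_zero]
  -- off-diagonal lower bound
  have hcap : ∀ i j : Fin r, i ≠ j →
      P (intervalClusters r m i ∩ intervalClusters r mhat j) ≤ ENNReal.ofReal (b / 8) := by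
    intro i j hij
    have hne : (i : ℕ) ≠ (j : ℕ) := fun h => hij (Fin.ext h)
    rcases lt_or_gt_of_ne hne with hlt | hgt
    · have hi : (i : ℕ) < r - 1 := by have := j.isLt; omega
      have hj' : (j : ℕ) - 1 < r - 1 := by have := j.isLt; omega
      refine le_of_lt (lt_of_le_of_lt (measure_mono ?_) (hcolδ ⟨(i : ℕ), hi⟩))
      rintro x ⟨hx1, hx2⟩
      simp only [intervalClusters, Set.mem_setOf_eq] at hx1 hx2
      have h1 : mhat ⟨(j : ℕ) - 1, hj'⟩ < x :=
        hx2.1 ⟨(j : ℕ) - 1, hj'⟩ (show (j : ℕ) - 1 < (j : ℕ) by omega)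
      have h2 : x < m ⟨(i : ℕ), hi⟩ := hx1.2 ⟨(i : ℕ), hi⟩ le_rfl
      have h3 : m ⟨(i : ℕ), hi⟩ ≤ m ⟨(j : ℕ) - 1, hj'⟩ :=
        hm_mono.monotone (Fin.le_def.2 (show (i : ℕ) ≤ (j : ℕ) - 1 by omega))
      have h4 := (hclose2 ⟨(j : ℕ) - 1, hj'⟩).1
      exact ⟨by linarith, by linarith [hδpos]⟩
    · have hi : (i : ℕ) - 1 < r - 1 := by have := i.isLt; omega
      have hj' : (j : ℕ) < r - 1 := by omega
      refine le_of_lt (lt_of_le_of_lt (measure_mono ?_) (hcolδ ⟨(i : ℕ) - 1, hi⟩))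
      rintro x ⟨hx1, hx2⟩
      simp only [intervalClusters, Set.mem_setOf_eq] at hx1 hx2
      have h1 : m ⟨(i : ℕ) - 1, hi⟩ < x :=
        hx1.1 ⟨(i : ℕ) - 1, hi⟩ (show (i : ℕ) - 1 < (i : ℕ) by omega)
      have h2 : x < mhat ⟨(j : ℕ), hj'⟩ := hx2.2 ⟨(j : ℕ), hj'⟩ le_rfl
      have h3 : m ⟨(j : ℕ), hj'⟩ ≤ m ⟨(i : ℕ) - 1, hi⟩ :=
        hm_mono.monotone (Fin.le_def.2 (show (j : ℕ) ≤ (i : ℕ) - 1 by omega))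
      have h4 := (hclose2 ⟨(j : ℕ), hj'⟩).2
      exact ⟨by linarith [hδpos], by linarith⟩
  have hoff : ∀ i j : Fin r, i ≠ j →
      ENNReal.ofReal (b / 2) ≤
        P (symmDiff (intervalClusters r m i) (intervalClusters r mhat j)) := by
    intro i j hij
    calc ENNReal.ofReal (b / 2)
        ≤ ENNReal.ofReal (b - b / 8) := ENNReal.ofReal_le_ofReal (by linarith)
      _ = ENNReal.ofReal b - ENNReal.ofReal (b / 8) :=
          ENNReal.ofReal_sub _ (by positivity)
      _ ≤ P (intervalClusters r m i) -
            P (intervalClusters r m i ∩ intervalClusters r mhat j) :=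
          tsub_le_tsub (hbeta i) (hcap i j hij)
      _ ≤ P (intervalClusters r m i \ intervalClusters r mhat j) := by
          rw [← Set.diff_self_inter]
          exact le_measure_diff
      _ ≤ P (symmDiff (intervalClusters r m i) (intervalClusters r mhat j)) := by
          rw [Set.symmDiff_def]
          exact measure_mono Set.subset_union_left
  have hdiagle : ∀ i : Fin r,
      P (symmDiff (intervalClusters r m i) (intervalClusters r mhat i)) ≤
        ENNReal.ofReal (b / 2) := by
    intro i
    rw [hdiag i]
    exact ENNReal.ofReal_le_ofReal (le_trans (hterm i) (by linarith))
  have hinf1 : ∀ i : Fin r,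
      (⨅ j : Fin r, P (symmDiff (intervalClusters r m i) (intervalClusters r mhat j))) =
        P (symmDiff (intervalClusters r m i) (intervalClusters r mhat i)) := by
    intro i
    refine le_antisymm (iInf_le _ i) (le_iInf fun j => ?_)
    by_cases h : i = j
    · rw [h]
    · exact le_trans (hdiagle i) (hoff i j h)
  have hinf2 : ∀ j : Fin r,
      (⨅ i : Fin r, P (symmDiff (intervalClusters r m i) (intervalClusters r mhat j))) =
        P (symmDiff (intervalClusters r m j) (intervalClusters r mhat j)) := by
    intro j
    refine le_antisymm (iInf_le _ j) (le_iInf fun i => ?_)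
    by_cases h : i = j
    · rw [h]
    · exact le_trans (hdiagle j) (hoff i j h)
  have hdist : clusterDistH P (intervalClusters r m) (intervalClusters r mhat) =
      ⨆ i : Fin r, P (symmDiff (intervalClusters r m i) (intervalClusters r mhat i)) := by
    simp only [clusterDistH]
    rw [iSup_congr hinf1, iSup_congr hinf2, max_self]
  haveI : Nonempty (Fin r) := ⟨⟨0, hr⟩⟩
  have part1 : (clusterDistH P (intervalClusters r m) (intervalClusters r mhat)).toReal =
      ⨆ i : Fin r,
        (P (symmDiff (intervalClusters r m i) (intervalClusters r mhat i))).toReal := by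
    rw [hdist, ENNReal.toReal_iSup (fun i => measure_ne_top _ _)]
  have part2 : (clusterDistH P (intervalClusters r m) (intervalClusters r mhat)).toReal =
      ⨆ i : Fin r,
        ((if (i : ℕ) = 0 then 0 else cutDiff P r m mhat ((i : ℕ) - 1)) +
          cutDiff P r m mhat (i : ℕ)) := by
    rw [part1]
    exact iSup_congr fun i => by rw [hdiag i, ENNReal.toReal_ofReal (hterm0 i)]
  refine ⟨part1, part2, ?_, ?_⟩
  · -- lower bound
    by_cases hre : r - 1 = 0
    · haveI : IsEmpty (Fin (r - 1)) := ⟨fun j => absurd j.isLt (by omega)⟩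
      rw [Real.iSup_of_isEmpty]
      exact ENNReal.toReal_nonneg
    · haveI : Nonempty (Fin (r - 1)) := ⟨⟨0, Nat.pos_of_ne_zero hre⟩⟩
      apply ciSup_le
      intro j
      rw [part2]
      have hij : (j : ℕ) + 1 < r := by have := j.isLt; omega
      refine le_trans ?_
        (le_ciSup (f := fun i : Fin r =>
            (if (i : ℕ) = 0 then 0 else cutDiff P r m mhat ((i : ℕ) - 1)) +
              cutDiff P r m mhat (i : ℕ))
          (Set.Finite.bddAbove (Set.finite_range _)) (⟨(j : ℕ) + 1, hij⟩ : Fin r))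
      show |distFun P (mhat j) - distFun P (m j)| ≤
        (if (j : ℕ) + 1 = 0 then 0 else cutDiff P r m mhat ((j : ℕ) + 1 - 1)) +
          cutDiff P r m mhat ((j : ℕ) + 1)
      rw [if_neg (Nat.succ_ne_zero _), Nat.add_sub_cancel]
      have e : cutDiff P r m mhat (j : ℕ) = |distFun P (mhat j) - distFun P (m j)| := by
        rw [cutDiff, dif_pos j.isLt]
      rw [e]
      linarith [hcd0 ((j : ℕ) + 1)]
  · -- upper bound
    have hA0 : 0 ≤ ⨆ j : Fin (r - 1), |distFun P (mhat j) - distFun P (m j)| := by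
      by_cases hre : r - 1 = 0
      · haveI : IsEmpty (Fin (r - 1)) := ⟨fun j => absurd j.isLt (by omega)⟩
        rw [Real.iSup_of_isEmpty]
      · haveI : Nonempty (Fin (r - 1)) := ⟨⟨0, Nat.pos_of_ne_zero hre⟩⟩
        exact le_trans (abs_nonneg _)
          (le_ciSup (f := fun j : Fin (r - 1) => |distFun P (mhat j) - distFun P (m j)|)
            (Set.Finite.bddAbove (Set.finite_range _)) (Classical.arbitrary _))
    have hAk : ∀ k : ℕ, cutDiff P r m mhat k ≤
        ⨆ j : Fin (r - 1), |distFun P (mhat j) - distFun P (m j)| := by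
      intro k
      rw [cutDiff]
      split
      · next h =>
          exact le_ciSup (f := fun j : Fin (r - 1) => |distFun P (mhat j) - distFun P (m j)|)
            (Set.Finite.bddAbove (Set.finite_range _)) (⟨k, h⟩ : Fin (r - 1))
      · exact hA0
    rw [part2]
    apply ciSup_le
    intro i
    have h1 : (if (i : ℕ) = 0 then 0 else cutDiff P r m mhat ((i : ℕ) - 1)) ≤
        ⨆ j : Fin (r - 1), |distFun P (mhat j) - distFun P (m j)| := by
      split_ifs
      · exact hA0
      · exact hAk _
    have h2 := hAk (i : ℕ)
    linarith
end
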